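/- arXiv:0706.2154 — 11 statements merged into one kernel-verified Lean document; each statement's English description precedes it below -/
import Mathlib

section
/- For n×n matrices over a commutative ring, the fundamental trace identity holds: for any n+1 matrices Y(1),...,Y(n+1) in M_n(C), the sum over all permutations π of S_{n+1} of sign(π) times Tr^π equals zero, where for π with cycle decomposition (i_1...i_d)...(j_1...j_e), Tr^π = Tr(Y(i_1)···Y(i_d))···Tr(Y(j_1)···Y(j_e)). -/
/-- For a permutation `π` of `Fin (n+1)` and matrices `Y 0, ..., Y n`, the product over
the cycles of `π` of the traces of the products of the `Y i` along each cycle (in cyclic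
order).  Expanding each cyclic trace as a sum over index assignments along the cycle, this
product equals the following sum over all functions `f : Fin (n+1) → Fin n`. -/
noncomputable def TrPow {C : Type*} [CommRing C] (n : ℕ)
    (π : Equiv.Perm (Fin (n + 1))) (Y : Fin (n + 1) → Matrix (Fin n) (Fin n) C) : C :=
  ∑ f : Fin (n + 1) → Fin n, ∏ i : Fin (n + 1), Y i (f i) (f (π i))

/-- The fundamental trace identity of `n × n` matrices over a commutative ring:
`∑_{π ∈ S_{n+1}} sign(π) · Tr^π = 0`. -/
theorem fundamental_trace_identity {C : Type*} [CommRing C] (n : ℕ)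
    (Y : Fin (n + 1) → Matrix (Fin n) (Fin n) C) :
    ∑ π : Equiv.Perm (Fin (n + 1)), (Equiv.Perm.sign π : ℤ) • TrPow n π Y = 0 := by
  unfold TrPow
  simp_rw [Finset.smul_sum]
  rw [Finset.sum_comm]
  refine Finset.sum_eq_zero fun f _ => ?_
  obtain ⟨i, j, hij, hf⟩ := Fintype.exists_ne_map_eq_of_card_lt f (by simp)
  have key : ∑ π : Equiv.Perm (Fin (n + 1)),
      (Equiv.Perm.sign π : ℤ) • ∏ k, Y k (f k) (f (π k))
      = (Matrix.of fun a b => Y a (f a) (f b)).det := by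
    rw [← Matrix.det_transpose, Matrix.det_apply]
    simp [Matrix.transpose_apply, Units.smul_def]
  rw [key]
  exact Matrix.det_zero_of_column_eq hij (fun k => by simp [hf])
end

section
/- Let K be a field in which n! is invertible. For any n+1 diagonal n×n matrices w_1,...,w_{n+1} with entries in a commutative K-algebra, the following identity holds: the sum over all set partitions λ = λ_1 ∪ ... ∪ λ_h of {1,...,n+1} of the product over i of (−1)(|λ_i|−1)! · Tr(∏_{s∈λ_i} w_s) equals zero. -/
/-!
Expanding each trace of a product of diagonal matrices as a sum over the diagonal index turns the
left-hand side into `∑ f, (∏ s, w s (f s)) * S f` over colourings `f : Fin (n + 1) → Fin n`, where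
`S f` is the sum of `∏ (-1) (|b| - 1)!` over the partitions all of whose parts are
`f`-monochromatic. A partition of `insert a t` arises from one of `t` either by adding the part
`{a}` or by adding `a` to an existing part; only the `k` points of `t` coloured like `a` can share
a part with it, so this gives `S (insert a t) = (k - 1) * S t`. Hence `S` vanishes as soon as `f`
is not injective, which by pigeonhole is always the case for `n + 1` points and `n` colours.
-/
open Finset

namespace Finpartition

variable {α : Type*} [DecidableEq α] {t : Finset α} {a : α}

lemma subset_of_mem_insert_empty {Q : Finpartition t} {b : Finset α}
    (hb : b ∈ insert ∅ Q.parts) : b ⊆ t := by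
  rcases mem_insert.1 hb with rfl | hb
  exacts [empty_subset t, Q.le hb]

/-- `a` joins the part `b` of `Q`, or forms the new part `{a}` when `b = ∅`. -/
def insertIntoPart (Q : Finpartition t) (ha : a ∉ t) {b : Finset α}
    (hb : b ∈ insert ∅ Q.parts) : Finpartition (insert a t) :=
  ofExistsUnique (insert (insert a b) (Q.parts.erase b))
    (by
      simp only [mem_insert, mem_erase]
      rintro p (rfl | ⟨-, hp⟩)
      exacts [insert_subset_insert a (subset_of_mem_insert_empty hb),
        (Q.le hp).trans (subset_insert a t)])
    (by
      intro x hx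
      rcases mem_insert.1 hx with rfl | hxt
      · refine ⟨insert x b, ⟨mem_insert_self _ _, mem_insert_self _ _⟩, ?_⟩
        rintro p ⟨hp, hxp⟩
        rcases mem_insert.1 hp with rfl | hp
        exacts [rfl, absurd (Q.le (mem_erase.1 hp).2 hxp) ha]
      by_cases hxb : x ∈ b
      · have hbQ : b ∈ Q.parts :=
          (mem_insert.1 hb).resolve_left (ne_empty_of_mem hxb)
        refine ⟨insert a b, ⟨mem_insert_self _ _, mem_insert_of_mem hxb⟩, ?_⟩
        rintro p ⟨hp, hxp⟩
        rcases mem_insert.1 hp with rfl | hp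
        exacts [rfl, absurd (Q.eq_of_mem_parts (mem_erase.1 hp).2 hbQ hxp hxb) (mem_erase.1 hp).1]
      · refine ⟨Q.part x, ⟨mem_insert_of_mem (mem_erase.2 ⟨fun h => hxb (h ▸ Q.mem_part hxt),
          Q.part_mem.2 hxt⟩), Q.mem_part hxt⟩, ?_⟩
        rintro p ⟨hp, hxp⟩
        rcases mem_insert.1 hp with rfl | hp
        · rcases mem_insert.1 hxp with rfl | hxb'
          exacts [absurd hxt ha, absurd hxb' hxb]
        · exact (Q.part_eq_of_mem (mem_erase.1 hp).2 hxp).symm)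
    (by
      simp only [mem_insert, mem_erase, not_or]
      exact ⟨(insert_ne_empty a b).symm, fun h => Q.empty_notMem_parts h.2⟩)

@[simp]
lemma parts_insertIntoPart (Q : Finpartition t) (ha : a ∉ t) {b : Finset α}
    (hb : b ∈ insert ∅ Q.parts) :
    (Q.insertIntoPart ha hb).parts = insert (insert a b) (Q.parts.erase b) := rfl

lemma parts_restrict {s : Finset α} (P : Finpartition s) (h : t ⊆ s) :
    (P.restrict h).parts = (P.parts.image (· ∩ t)).erase ∅ := rfl

lemma erase_part_eq_inter (P : Finpartition (insert a t)) (ha : a ∉ t) :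
    (P.part a).erase a = P.part a ∩ t := by
  have := P.part_subset a
  ext x
  simp only [mem_erase, mem_inter]
  constructor
  · rintro ⟨hxa, hx⟩
    exact ⟨hx, (mem_insert.1 (this hx)).resolve_left hxa⟩
  · rintro ⟨hx, hxt⟩
    exact ⟨fun h => ha (h ▸ hxt), hx⟩

def insertEquiv (ha : a ∉ t) :
    (Σ Q : Finpartition t, {b // b ∈ insert ∅ Q.parts}) ≃ Finpartition (insert a t) where
  toFun x := x.1.insertIntoPart ha x.2.2
  invFun P := ⟨P.restrict (subset_insert a t), (P.part a).erase a, by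
    rw [erase_part_eq_inter P ha, parts_restrict, mem_insert, mem_erase, mem_image]
    by_cases h : P.part a ∩ t = ∅
    · exact .inl h
    · exact .inr ⟨h, P.part a, P.part_mem.2 (mem_insert_self a t), rfl⟩⟩
  left_inv := by
    rintro ⟨Q, b, hb⟩
    have hbt := subset_of_mem_insert_empty hb
    have hab : a ∉ b := fun h => ha (hbt h)
    have hpart : (Q.insertIntoPart ha hb).part a = insert a b :=
      part_eq_of_mem _ (mem_insert_self _ _) (mem_insert_self _ _)
    refine Sigma.subtype_ext ?_ (by simp [hpart, erase_insert hab])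
    ext p
    simp only [parts_restrict, parts_insertIntoPart, mem_erase, mem_image, mem_insert]
    have hQ : ∀ q ∈ Q.parts, q ∩ t = q := fun q hq => inter_eq_left.2 (Q.le hq)
    have hat : insert a b ∩ t = b := by rw [insert_inter_of_notMem ha, inter_eq_left.2 hbt]
    have h0 := Q.empty_notMem_parts
    have hbQ : b = ∅ ∨ b ∈ Q.parts := mem_insert.1 hb
    grind
  right_inv := by
    intro P
    ext p
    have hpa : P.part a ∈ P.parts := P.part_mem.2 (mem_insert_self a t)
    have hapa : a ∈ P.part a := P.mem_part (mem_insert_self a t)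
    have hsub : ∀ q ∈ P.parts, q ⊆ P.part a → q = P.part a := fun q hq hqa =>
      have ⟨x, hx⟩ := P.nonempty_of_mem_parts hq
      P.eq_of_mem_parts hq hpa hx (hqa hx)
    have hinter : ∀ q ∈ P.parts, q = P.part a ∨ q ∩ t = q := fun q hq => by
      by_cases haq : a ∈ q
      · exact .inl (P.eq_of_mem_parts hq hpa haq hapa)
      · exact .inr <| inter_eq_left.2 fun x hx =>
          (mem_insert.1 (P.le hq hx)).resolve_left fun h => haq (h ▸ hx)
    have h0 := P.empty_notMem_parts
    simp only [parts_restrict, parts_insertIntoPart, insert_erase hapa, mem_insert, mem_erase,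
      mem_image]
    rw [erase_part_eq_inter P ha]
    grind

theorem sum_insert {M : Type*} [AddCommMonoid M] (ha : a ∉ t) (G : Finset (Finset α) → M) :
    ∑ P : Finpartition (insert a t), G P.parts =
      ∑ Q : Finpartition t, ∑ b ∈ insert ∅ Q.parts, G (insert (insert a b) (Q.parts.erase b)) := by
  rw [← (insertEquiv ha).sum_comp, Fintype.sum_sigma]
  exact sum_congr rfl fun Q _ =>
    sum_coe_sort (insert ∅ Q.parts) fun b => G (insert (insert a b) (Q.parts.erase b))

theorem sum_card_filter_parts (Q : Finpartition t) (p : α → Prop) [DecidablePred p] :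
    ∑ b ∈ Q.parts, #{x ∈ b | p x} = #{x ∈ t | p x} := by
  rw [← card_biUnion (Q.supIndep.pairwiseDisjoint.mono fun b => filter_subset p b),
    ← filter_biUnion]
  exact congrArg (fun s => #{x ∈ s | p x}) Q.biUnion_parts

end Finpartition

section MonochromaticWeight

variable {α β R : Type*} [DecidableEq β] [CommRing R]

def monochromaticWeight (f : α → β) (b : Finset α) : R :=
  if ∀ x ∈ b, ∀ y ∈ b, f x = f y then (-1 : R) * (#b - 1).factorial else 0

variable (f : α → β) {a : α} {b t : Finset α}

theorem monochromaticWeight_singleton : monochromaticWeight f {a} = (-1 : R) := by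
  simp [monochromaticWeight]

theorem monochromaticWeight_insert [DecidableEq α] (hab : a ∉ b) (hb : b.Nonempty) :
    monochromaticWeight f (insert a b) = #{x ∈ b | f x = f a} * (monochromaticWeight f b : R) := by
  obtain ⟨c, hc⟩ := hb
  unfold monochromaticWeight
  by_cases hmono : ∀ x ∈ b, ∀ y ∈ b, f x = f y
  · by_cases hca : f c = f a
    · have hall : ∀ x ∈ b, f x = f a := fun x hx => (hmono x hx c hc).trans hca
      rw [if_pos hmono, if_pos (by grind), filter_true_of_mem hall, card_insert_of_notMem hab,
        Nat.add_sub_cancel, ← Nat.mul_factorial_pred (card_ne_zero_of_mem hc)]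
      push_cast
      ring
    · have hnone : ∀ x ∈ b, ¬f x = f a := fun x hx h => hca ((hmono c hc x hx).trans h)
      rw [if_neg (fun h => hca (h c (mem_insert_of_mem hc) a (mem_insert_self a b))),
        filter_false_of_mem hnone, card_empty, Nat.cast_zero, zero_mul]
  · rw [if_neg hmono, if_neg (fun h => hmono fun x hx y hy =>
      h x (mem_insert_of_mem hx) y (mem_insert_of_mem hy)), mul_zero]

theorem sum_prod_monochromaticWeight_insert [DecidableEq α] (ha : a ∉ t) :
    ∑ P : Finpartition (insert a t), ∏ b ∈ P.parts, monochromaticWeight f b =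
      (#{x ∈ t | f x = f a} - 1 : R) *
        ∑ Q : Finpartition t, ∏ b ∈ Q.parts, monochromaticWeight f b := by
  rw [Finpartition.sum_insert ha fun parts => ∏ b ∈ parts, monochromaticWeight f b, mul_sum]
  refine sum_congr rfl fun Q _ => ?_
  have hnew : ∀ b, insert a b ∉ Q.parts.erase b := fun b h =>
    ha (Q.le (mem_of_mem_erase h) (mem_insert_self a b))
  have hjoin : ∀ b ∈ Q.parts,
      ∏ p ∈ insert (insert a b) (Q.parts.erase b), (monochromaticWeight f p : R) =
        #{x ∈ b | f x = f a} * ∏ p ∈ Q.parts, monochromaticWeight f p := fun b hb => by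
    rw [prod_insert (hnew b), monochromaticWeight_insert f (fun h => ha (Q.le hb h))
      (Q.nonempty_of_mem_parts hb), mul_assoc, mul_prod_erase _ _ hb]
  have h0 := Q.empty_notMem_parts
  rw [sum_insert h0, sum_congr rfl hjoin, ← sum_mul, ← Nat.cast_sum, Q.sum_card_filter_parts,
    insert_empty, erase_eq_of_notMem h0, prod_insert (by simpa using hnew ∅),
    monochromaticWeight_singleton]
  ring

theorem sum_prod_monochromaticWeight_eq_zero [DecidableEq α] (h : ¬Set.InjOn f t) :
    ∑ P : Finpartition t, ∏ b ∈ P.parts, (monochromaticWeight f b : R) = 0 := by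
  induction t using Finset.induction_on with
  | empty => simp at h
  | insert a t ha ih =>
    rw [sum_prod_monochromaticWeight_insert f ha]
    by_cases hinj : Set.InjOn f t
    · rw [coe_insert, Set.injOn_insert (mod_cast ha), not_and, not_not] at h
      obtain ⟨x, hx, hxa⟩ := h hinj
      have hfiber : {y ∈ t | f y = f a} = {x} := by
        ext y
        simp only [mem_filter, mem_singleton]
        exact ⟨fun ⟨hy, hya⟩ => hinj hy hx (hya.trans hxa.symm), by rintro rfl; exact ⟨hx, hxa⟩⟩
      rw [hfiber, card_singleton, Nat.cast_one, sub_self, zero_mul]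
    · rw [ih hinj, mul_zero]

end MonochromaticWeight

namespace Finpartition

variable {α β : Type*} [Fintype α] [DecidableEq α] [Fintype β] [DecidableEq β]

theorem sum_comp_part_eq_sum_ite {M : Type*} [AddCommMonoid M]
    (P : Finpartition (univ : Finset α)) (Φ : (α → β) → M) :
    ∑ p : P.parts → β, Φ (fun s => p ⟨P.part s, P.part_mem.2 (mem_univ s)⟩) =
      ∑ f : α → β, if ∀ b ∈ P.parts, ∀ x ∈ b, ∀ y ∈ b, f x = f y then Φ f else 0 := by
  set partOf : α → P.parts := fun s => ⟨P.part s, P.part_mem.2 (mem_univ s)⟩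
  have hpartOf : ∀ b (hb : b ∈ P.parts), ∀ x ∈ b, partOf x = ⟨b, hb⟩ := fun b hb x hx =>
    Subtype.ext (P.part_eq_of_mem hb hx)
  have hsurj : Function.Surjective partOf := fun ⟨b, hb⟩ =>
    let ⟨x, hx⟩ := P.nonempty_of_mem_parts hb
    ⟨x, hpartOf b hb x hx⟩
  refine sum_of_injOn (· ∘ partOf) hsurj.injective_comp_right.injOn (fun _ _ => mem_univ _)
    (fun f _ hf => if_neg fun hconst => hf ?_) (fun p _ => (if_pos ?_).symm)
  · refine ⟨fun b => f (P.nonempty_of_mem_parts b.2).choose, mem_coe.2 (mem_univ _),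
      funext fun s => ?_⟩
    have hs := P.part_mem.2 (mem_univ s)
    exact hconst _ hs _ (P.nonempty_of_mem_parts hs).choose_spec s (P.mem_part (mem_univ s))
  · intro b hb x hx y hy
    simp only [Function.comp_apply, hpartOf b hb x hx, hpartOf b hb y hy]

variable {R : Type*} [CommRing R]

theorem prod_mul_sum_prod_eq_sum_monochromaticWeight (P : Finpartition (univ : Finset α))
    (w : α → β → R) :
    ∏ b ∈ P.parts, ((-1 : R) * (#b - 1).factorial * ∑ j, ∏ s ∈ b, w s j) =
      ∑ f : α → β, (∏ b ∈ P.parts, monochromaticWeight f b) * ∏ s, w s (f s) := by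
  set c : Finset α → R := fun b => (-1 : R) * (#b - 1).factorial
  set Φ : (α → β) → R := fun f => ∏ b ∈ P.parts, c b * ∏ s ∈ b, w s (f s)
  calc ∏ b ∈ P.parts, (c b * ∑ j, ∏ s ∈ b, w s j)
      = ∑ p : P.parts → β, ∏ b : P.parts, c b * ∏ s ∈ b.1, w s (p b) := by
        simp_rw [mul_sum]
        rw [← prod_coe_sort, Fintype.prod_sum]
    _ = ∑ p : P.parts → β, Φ (fun s => p ⟨P.part s, P.part_mem.2 (mem_univ s)⟩) := by
        refine sum_congr rfl fun p _ => ?_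
        dsimp only [Φ]
        rw [← prod_coe_sort P.parts]
        refine prod_congr rfl fun b _ => congrArg (c b.1 * ·) (prod_congr rfl fun s hs => ?_)
        exact congrArg (w s ∘ p) (Subtype.ext (P.part_eq_of_mem b.2 hs).symm)
    _ = ∑ f : α → β, if ∀ b ∈ P.parts, ∀ x ∈ b, ∀ y ∈ b, f x = f y then Φ f else 0 :=
        P.sum_comp_part_eq_sum_ite Φ
    _ = _ := by
        refine sum_congr rfl fun f _ => ?_
        split_ifs with hconst
        · have hsplit : ∏ s, w s (f s) = ∏ b ∈ P.parts, ∏ s ∈ b, w s (f s) := by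
            have h := prod_biUnion (f := fun s => w s (f s)) P.supIndep.pairwiseDisjoint
            rwa [P.biUnion_parts] at h
          rw [hsplit, ← prod_mul_distrib]
          exact prod_congr rfl fun b hb => by rw [monochromaticWeight, if_pos (hconst b hb)]
        · obtain ⟨b, hb, hnot⟩ := not_forall₂.1 hconst
          rw [prod_eq_zero hb (if_neg hnot), zero_mul]

end Finpartition

theorem diagonal_fundamental_trace_identity_general
    {A : Type*} [CommRing A] (n : ℕ)
    (w : Fin (n + 1) → Fin n → A) :
    ∑ P : Finpartition (Finset.univ : Finset (Fin (n + 1))),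
      ∏ b ∈ P.parts,
        ((-1 : A) * (b.card - 1).factorial * ∑ j : Fin n, ∏ s ∈ b, w s j) = 0 := by
  have hnotInj : ∀ f : Fin (n + 1) → Fin n, ¬Set.InjOn f (univ : Finset (Fin (n + 1))) := by
    intro f hinj
    rw [coe_univ, Set.injOn_univ] at hinj
    simpa using Fintype.card_le_of_injective f hinj
  simp_rw [Finpartition.prod_mul_sum_prod_eq_sum_monochromaticWeight]
  rw [sum_comm]
  exact sum_eq_zero fun f _ => by
    rw [← sum_mul, sum_prod_monochromaticWeight_eq_zero f (hnotInj f), zero_mul]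

/-- The fundamental trace identity specialized to diagonal matrices: if `n!` is invertible
in the field `K`, then for any `n+1` diagonal `n × n` matrices over a commutative
`K`-algebra `A` (given by their diagonal entry vectors `w s : Fin n → A`), the sum over
all set partitions `λ` of `{1, ..., n+1}` of `∏_i (−1)·(|λ_i|−1)! · Tr(∏_{s ∈ λ_i} w s)`
vanishes. -/
theorem diagonal_fundamental_trace_identity
    (K : Type*) [Field K] {A : Type*} [CommRing A] [Algebra K A] (n : ℕ)
    (hn : IsUnit (n.factorial : K))
    (w : Fin (n + 1) → Fin n → A) :
    ∑ P : Finpartition (Finset.univ : Finset (Fin (n + 1))),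
      ∏ b ∈ P.parts,
        ((-1 : A) * (b.card - 1).factorial * ∑ j : Fin n, ∏ s ∈ b, w s j) = 0 :=
  diagonal_fundamental_trace_identity_general n w
end

section
/- Let K be a field with n! invertible, and let w_1,...,w_{n+1} be nonempty monomials in the commuting variables x(1),...,x(m). Then in K[V^m]^{S_n}, the product [w_1]···[w_{n+1}] is a K-linear combination of products of at most n polarized power sums [u], where the u are nonempty monomials. -/
open MvPolynomial

/-- The polarized power sum `[w] = ∑_{j=1}^n ∏_i x(i)_j^{a i}` associated to the monomial
`w = x(1)^{a 1} ⋯ x(m)^{a m}`. -/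
noncomputable def polPowerSum (K : Type*) [CommRing K] (m n : ℕ) (a : Fin m → ℕ) :
    MvPolynomial (Fin m × Fin n) K :=
  ∑ j : Fin n, ∏ i : Fin m, X (i, j) ^ a i

section Aux

variable (K : Type*) [CommRing K] (m n : ℕ)

/-- The monomial `∏ i, x(i)_j^{a i}` supported in column `j`. -/
noncomputable def PPSaux.colMon (a : Fin m → ℕ) (j : Fin n) : MvPolynomial (Fin m × Fin n) K :=
  ∏ i : Fin m, X (i, j) ^ a i

lemma PPSaux.polPowerSum_eq (a : Fin m → ℕ) :
    polPowerSum K m n a = ∑ j : Fin n, PPSaux.colMon K m n a j := rfl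

lemma PPSaux.colMon_add (a b : Fin m → ℕ) (j : Fin n) :
    PPSaux.colMon K m n (a + b) j = PPSaux.colMon K m n a j * PPSaux.colMon K m n b j := by
  simp [PPSaux.colMon, Pi.add_apply, pow_add, Finset.prod_mul_distrib]

/-- Sum over injective column assignments. -/
noncomputable def PPSaux.injS (r : ℕ) (w : Fin r → (Fin m → ℕ)) :
    MvPolynomial (Fin m × Fin n) K :=
  ∑ φ ∈ Finset.univ.filter (fun φ : Fin r → Fin n => Function.Injective φ),
    ∏ i : Fin r, PPSaux.colMon K m n (w i) (φ i)

lemma PPSaux.injS_zero (w : Fin 0 → (Fin m → ℕ)) : PPSaux.injS K m n 0 w = 1 := by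
  rw [PPSaux.injS]
  rw [Finset.filter_true_of_mem (fun φ _ => Function.injective_of_subsingleton φ)]
  simp

lemma PPSaux.snoc_injective {r : ℕ} {ψ : Fin r → Fin n} {j : Fin n}
    (h : Function.Injective ψ) (hj : ∀ i, ψ i ≠ j) :
    Function.Injective (Fin.snoc ψ j : Fin (r + 1) → Fin n) := by
  intro a b hab
  rcases Fin.eq_castSucc_or_eq_last a with ⟨a', rfl⟩ | rfl <;>
    rcases Fin.eq_castSucc_or_eq_last b with ⟨b', rfl⟩ | rfl
  · simp only [Fin.snoc_castSucc] at hab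
    exact congrArg _ (h hab)
  · simp only [Fin.snoc_castSucc, Fin.snoc_last] at hab
    exact absurd hab (hj a')
  · simp only [Fin.snoc_castSucc, Fin.snoc_last] at hab
    exact absurd hab.symm (hj b')
  · rfl

/-- The key recursion. -/
lemma PPSaux.injS_succ (r : ℕ) (w : Fin (r + 1) → (Fin m → ℕ)) :
    polPowerSum K m n (w (Fin.last r)) *
        PPSaux.injS K m n r (fun i => w i.castSucc)
      = PPSaux.injS K m n (r + 1) w
        + ∑ i : Fin r, PPSaux.injS K m n r
            (Function.update (fun i' => w i'.castSucc) i
              (w i.castSucc + w (Fin.last r))) := by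
  classical
  set w' : Fin r → (Fin m → ℕ) := fun i => w i.castSucc with hw'
  rw [PPSaux.polPowerSum_eq, PPSaux.injS, Finset.sum_mul_sum, Finset.sum_comm]
  have hsplit : ∀ ψ ∈ Finset.univ.filter (fun φ : Fin r → Fin n => Function.Injective φ),
      (∑ j : Fin n, PPSaux.colMon K m n (w (Fin.last r)) j *
          ∏ i : Fin r, PPSaux.colMon K m n (w' i) (ψ i))
        = (∑ j ∈ (Finset.univ.image ψ)ᶜ, PPSaux.colMon K m n (w (Fin.last r)) j *
            ∏ i : Fin r, PPSaux.colMon K m n (w' i) (ψ i))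
          + ∑ i : Fin r, PPSaux.colMon K m n (w (Fin.last r)) (ψ i) *
              ∏ i' : Fin r, PPSaux.colMon K m n (w' i') (ψ i') := by
    intro ψ hψ
    rw [Finset.mem_filter] at hψ
    rw [← Finset.sum_compl_add_sum (Finset.univ.image ψ)
      (fun j => PPSaux.colMon K m n (w (Fin.last r)) j *
          ∏ i : Fin r, PPSaux.colMon K m n (w' i) (ψ i))]
    congr 1
    exact Finset.sum_image fun a _ b _ h => hψ.2 h
  rw [Finset.sum_congr rfl hsplit, Finset.sum_add_distrib]
  congr 1
  · -- the injective part: reindex by snoc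
    rw [PPSaux.injS, Finset.sum_sigma']
    refine Finset.sum_bij' (fun p _ => (Fin.snoc p.1 p.2 : Fin (r + 1) → Fin n))
      (fun φ _ => ⟨Fin.init φ, φ (Fin.last r)⟩) ?_ ?_ ?_ ?_ ?_
    · rintro ⟨ψ, j⟩ hp
      rw [Finset.mem_sigma, Finset.mem_filter] at hp
      have hj : ∀ i, ψ i ≠ j := fun i hi =>
        Finset.mem_compl.mp hp.2 (hi ▸ Finset.mem_image_of_mem ψ (Finset.mem_univ i))
      exact Finset.mem_filter.mpr ⟨Finset.mem_univ _,
        PPSaux.snoc_injective (h := hp.1.2) (hj := hj)⟩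
    · intro φ hφ
      rw [Finset.mem_filter] at hφ
      rw [Finset.mem_sigma, Finset.mem_filter]
      refine ⟨⟨Finset.mem_univ _, ?_⟩, ?_⟩
      · intro a b hab
        have : φ a.castSucc = φ b.castSucc := hab
        exact Fin.castSucc_injective r (hφ.2 this)
      · rw [Finset.mem_compl]
        intro hmem
        rcases Finset.mem_image.mp hmem with ⟨i, -, hi⟩
        have : φ i.castSucc = φ (Fin.last r) := hi
        exact absurd (hφ.2 this) (Fin.castSucc_lt_last i).ne
    · rintro ⟨ψ, j⟩ hp
      exact Sigma.ext (by simp) (by simp)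
    · intro φ hφ
      exact Fin.snoc_init_self φ
    · rintro ⟨ψ, j⟩ hp
      rw [Fin.prod_univ_castSucc]
      simp only [Fin.snoc_castSucc, Fin.snoc_last]
      rw [mul_comm]
  · -- the merged part
    rw [Finset.sum_comm]
    refine Finset.sum_congr rfl fun i _ => ?_
    rw [PPSaux.injS]
    refine Finset.sum_congr rfl fun ψ hψ => ?_
    have hupd : (fun i' : Fin r =>
        PPSaux.colMon K m n
          (Function.update w' i (w' i + w (Fin.last r)) i') (ψ i'))
        = Function.update (fun i' => PPSaux.colMon K m n (w' i') (ψ i')) i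
            (PPSaux.colMon K m n (w' i + w (Fin.last r)) (ψ i)) := by
      ext i'
      by_cases h : i' = i
      · subst h; simp
      · simp [Function.update_of_ne h]
    rw [hupd, Finset.prod_update_of_mem (Finset.mem_univ i), PPSaux.colMon_add,
      ← Finset.mul_prod_erase Finset.univ _ (Finset.mem_univ i), Finset.erase_eq]
    ring

end Aux

/-- If `n!` is invertible in the field `K` and `w₁, …, w_{n+1}` are nonempty monomials in
`x(1), …, x(m)`, then the product `[w₁]⋯[w_{n+1}]` is a `K`-linear combination of
products of at most `n` polarized power sums `[u]` with `u` nonempty monomials. -/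
theorem prod_of_succ_polPowerSums_mem_span
    (K : Type*) [Field K] (m n : ℕ) (hn : IsUnit (n.factorial : K))
    (w : Fin (n + 1) → (Fin m → ℕ)) (hw : ∀ i, w i ≠ 0) :
    (∏ i : Fin (n + 1), polPowerSum K m n (w i)) ∈
      Submodule.span K {f : MvPolynomial (Fin m × Fin n) K |
        ∃ M : Multiset (Fin m → ℕ), M.card ≤ n ∧ (∀ a ∈ M, a ≠ 0) ∧
          f = (M.map (polPowerSum K m n)).prod} := by
  classical
  set SP : ℕ → Set (MvPolynomial (Fin m × Fin n) K) := fun k =>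
    {f | ∃ M : Multiset (Fin m → ℕ), M.card ≤ k ∧ (∀ a ∈ M, a ≠ 0) ∧
      f = (M.map (polPowerSum K m n)).prod} with hSP
  have hmono : ∀ k k', k ≤ k' → SP k ⊆ SP k' := by
    rintro k k' hk f ⟨M, hM1, hM2, hM3⟩
    exact ⟨M, hM1.trans hk, hM2, hM3⟩
  -- key induction
  have key : ∀ r : ℕ, r ≤ n + 1 → ∀ v : Fin r → (Fin m → ℕ), (∀ i, v i ≠ 0) →
      (∏ i : Fin r, polPowerSum K m n (v i)) - PPSaux.injS K m n r v ∈
        Submodule.span K (SP (r - 1)) := by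
    intro r
    induction r with
    | zero =>
      intro _ v _
      simp [PPSaux.injS_zero]
    | succ r IH =>
      intro hr v hv
      rcases Nat.eq_zero_or_pos r with rfl | hrpos
      · -- base case `r = 0` : the difference vanishes
        have h1 : PPSaux.injS K m n 1 v = polPowerSum K m n (v 0) := by
          rw [PPSaux.injS,
            Finset.filter_true_of_mem (fun φ _ => Function.injective_of_subsingleton φ),
            PPSaux.polPowerSum_eq]
          refine Fintype.sum_equiv (Equiv.funUnique (Fin 1) (Fin n)) _ _ fun φ => ?_
          simp [Fin.prod_univ_one, Equiv.funUnique, PPSaux.colMon]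
        rw [Fin.prod_univ_one, h1, sub_self]
        exact Submodule.zero_mem _
      have hrn : r ≤ n := Nat.lt_succ_iff.mp hr
      set v' : Fin r → (Fin m → ℕ) := fun i => v i.castSucc with hv'
      have hv'ne : ∀ i, v' i ≠ 0 := fun i => hv i.castSucc
      have IH' := IH (by omega) v' hv'ne
      have hrec := PPSaux.injS_succ K m n r v
      have hprod : (∏ i : Fin (r + 1), polPowerSum K m n (v i))
          = polPowerSum K m n (v (Fin.last r)) * ∏ i : Fin r, polPowerSum K m n (v' i) := by
        rw [Fin.prod_univ_castSucc, mul_comm]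
      have heq : (∏ i : Fin (r + 1), polPowerSum K m n (v i)) -
          PPSaux.injS K m n (r + 1) v
          = polPowerSum K m n (v (Fin.last r)) *
              ((∏ i : Fin r, polPowerSum K m n (v' i)) - PPSaux.injS K m n r v')
            + ∑ i : Fin r, PPSaux.injS K m n r
                (Function.update v' i (v' i + v (Fin.last r))) := by
        rw [hprod]
        have : PPSaux.injS K m n (r + 1) v =
            polPowerSum K m n (v (Fin.last r)) * PPSaux.injS K m n r v'
            - ∑ i : Fin r, PPSaux.injS K m n r
                (Function.update v' i (v' i + v (Fin.last r))) := by
          rw [hrec]; ring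
        rw [this]; ring
      rw [heq]
      refine Submodule.add_mem _ ?_ ?_
      · -- multiply the span by a fixed polPowerSum
        have h1 : polPowerSum K m n (v (Fin.last r)) *
            ((∏ i : Fin r, polPowerSum K m n (v' i)) - PPSaux.injS K m n r v')
            ∈ Submodule.map (LinearMap.mulLeft K (polPowerSum K m n (v (Fin.last r))))
              (Submodule.span K (SP (r - 1))) :=
          ⟨_, IH', rfl⟩
        rw [Submodule.map_span] at h1
        refine Submodule.span_le.mpr ?_ h1
        rintro f ⟨g, ⟨M, hM1, hM2, hM3⟩, rfl⟩
        refine Submodule.subset_span ⟨v (Fin.last r) ::ₘ M, ?_, ?_, ?_⟩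
        · simp only [Multiset.card_cons]
          omega
        · intro a ha
          rcases Multiset.mem_cons.mp ha with rfl | ha
          · exact hv _
          · exact hM2 a ha
        · simp [hM3, LinearMap.mulLeft_apply]
      · -- merged terms
        refine Submodule.sum_mem _ fun i _ => ?_
        set u : Fin r → (Fin m → ℕ) := Function.update v' i (v' i + v (Fin.last r)) with hu
        have hune : ∀ i', u i' ≠ 0 := by
          intro i'
          by_cases h : i' = i
          · subst h
            simp only [hu, Function.update_self]
            intro hcontra
            apply hv (Fin.last r)
            ext k
            have := congrFun hcontra k
            simp only [Pi.add_apply, Pi.zero_apply] at this ⊢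
            omega
          · simpa [hu, Function.update_of_ne h] using hv'ne i'
        have hIHu := IH (by omega) u hune
        have hprodu : (∏ i' : Fin r, polPowerSum K m n (u i')) ∈ SP r := by
          refine ⟨Multiset.map u Finset.univ.val, ?_, ?_, ?_⟩
          · simp
          · intro a ha
            rcases Multiset.mem_map.mp ha with ⟨i', _, rfl⟩
            exact hune i'
          · rw [Multiset.map_map]
            rfl
        have : PPSaux.injS K m n r u
            = (∏ i' : Fin r, polPowerSum K m n (u i'))
              - ((∏ i' : Fin r, polPowerSum K m n (u i')) - PPSaux.injS K m n r u) := by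
          ring
        rw [this]
        refine Submodule.sub_mem _ (Submodule.subset_span (hmono _ _ (by omega) hprodu)) ?_
        exact Submodule.span_mono (hmono _ _ (by omega)) hIHu
  -- apply with r = n + 1
  have h0 : PPSaux.injS K m n (n + 1) w = 0 := by
    rw [PPSaux.injS]
    have : Finset.univ.filter (fun φ : Fin (n + 1) → Fin n => Function.Injective φ) = ∅ := by
      refine Finset.filter_false_of_mem fun φ _ hφ => ?_
      have := Fintype.card_le_of_injective φ hφ
      simp at this
    rw [this, Finset.sum_empty]
  have := key (n + 1) (le_refl _) w hw
  rw [h0, sub_zero] at this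
  simpa [hSP] using this
end

section
/- Let K be a field with n! invertible. The algebra of multisymmetric polynomials K[V^m]^{S_n} is generated as a K-algebra by the polarized power sums [w] where w ranges over nonempty monomials in x(1),...,x(m) of total degree at most n. -/
open MvPolynomial

/-- `f` is invariant under the `S_n`-action permuting the index `j`. -/
def IsMultiSymm {K : Type*} [CommRing K] {m n : ℕ} (f : MvPolynomial (Fin m × Fin n) K) :
    Prop :=
  ∀ σ : Equiv.Perm (Fin n), rename (fun p : Fin m × Fin n => (p.1, σ p.2)) f = f

namespace MultiSymmAux

variable {K : Type*} [CommRing K] {m n : ℕ}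

/-- The monomial attached to column `j` with exponent vector `a`. -/
noncomputable def mu (a : Fin m → ℕ) (j : Fin n) : MvPolynomial (Fin m × Fin n) K :=
  ∏ i : Fin m, X (i, j) ^ a i

lemma mu_add (a b : Fin m → ℕ) (j : Fin n) :
    (mu (a + b) j : MvPolynomial (Fin m × Fin n) K) = mu a j * mu b j := by
  simp [mu, pow_add, Finset.prod_mul_distrib]

lemma polPowerSum_eq (a : Fin m → ℕ) :
    polPowerSum K m n a = ∑ j : Fin n, (mu a j : MvPolynomial (Fin m × Fin n) K) := rfl

/-- Sum over injective tuples of columns. -/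
noncomputable def Esum {ℓ : ℕ} (a : Fin ℓ → (Fin m → ℕ)) : MvPolynomial (Fin m × Fin n) K :=
  ∑ φ ∈ Finset.univ.filter (fun φ : Fin ℓ → Fin n => Function.Injective φ),
    ∏ t, mu (a t) (φ t)

lemma Esum_eq_zero {ℓ : ℕ} (h : n < ℓ) (a : Fin ℓ → (Fin m → ℕ)) :
    (Esum a : MvPolynomial (Fin m × Fin n) K) = 0 := by
  rw [Esum, Finset.filter_false_of_mem, Finset.sum_empty]
  intro φ _ hφ
  have := Fintype.card_le_of_injective φ hφ
  simp only [Fintype.card_fin] at this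
  omega

lemma Esum_cons {ℓ : ℕ} (a0 : Fin m → ℕ) (a : Fin ℓ → (Fin m → ℕ)) :
    (Esum (Fin.cons a0 a) : MvPolynomial (Fin m × Fin n) K) =
      polPowerSum K m n a0 * Esum a
        - ∑ t, Esum (Function.update a t (a t + a0)) := by
  have hA : (Esum (Fin.cons a0 a) : MvPolynomial (Fin m × Fin n) K)
      = ∑ ψ ∈ Finset.univ.filter (fun ψ : Fin ℓ → Fin n => Function.Injective ψ),
          ∑ j ∈ Finset.univ \ Finset.image ψ Finset.univ,
            mu a0 j * ∏ t, mu (a t) (ψ t) := by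
    rw [Finset.sum_sigma'
        (Finset.univ.filter (fun ψ : Fin ℓ → Fin n => Function.Injective ψ))
        (fun ψ => Finset.univ \ Finset.image ψ Finset.univ)
        (fun ψ j => mu a0 j * ∏ t, mu (a t) (ψ t)),
      Esum]
    refine Finset.sum_bij'
      (fun (φ : Fin (ℓ + 1) → Fin n) _ =>
        (⟨Fin.tail φ, φ 0⟩ : Σ _ : Fin ℓ → Fin n, Fin n))
      (fun x _ => Fin.cons x.2 x.1) ?_ ?_ ?_ ?_ ?_
    · intro φ hφ
      simp only [Finset.mem_filter, Finset.mem_univ, true_and] at hφ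
      simp only [Finset.mem_sigma, Finset.mem_filter, Finset.mem_univ, true_and,
        Finset.mem_sdiff]
      constructor
      · intro x y hxy
        exact Fin.succ_injective _ (hφ hxy)
      · intro hmem
        obtain ⟨t, -, ht⟩ := Finset.mem_image.mp hmem
        exact Fin.succ_ne_zero t (hφ ht)
    · intro x hx
      simp only [Finset.mem_sigma, Finset.mem_filter, Finset.mem_univ, true_and,
        Finset.mem_sdiff] at hx
      simp only [Finset.mem_filter, Finset.mem_univ, true_and]
      rw [Fin.cons_injective_iff]
      refine ⟨?_, hx.1⟩
      rintro ⟨t, ht⟩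
      exact hx.2 (Finset.mem_image.mpr ⟨t, Finset.mem_univ t, ht⟩)
    · intro φ _
      exact Fin.cons_self_tail φ
    · intro x _
      simp
    · intro φ _
      rw [Fin.prod_univ_succ]
      simp [Fin.tail]
  have hB : (∑ t, Esum (Function.update a t (a t + a0))
        : MvPolynomial (Fin m × Fin n) K)
      = ∑ ψ ∈ Finset.univ.filter (fun ψ : Fin ℓ → Fin n => Function.Injective ψ),
          ∑ j ∈ Finset.image ψ Finset.univ,
            mu a0 j * ∏ t, mu (a t) (ψ t) := by
    simp only [Esum]
    rw [Finset.sum_comm]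
    refine Finset.sum_congr rfl fun ψ hψ => ?_
    have hinj : Function.Injective ψ := by
      simpa using (Finset.mem_filter.mp hψ).2
    rw [Finset.sum_image (fun x _ y _ h => hinj h)]
    refine Finset.sum_congr rfl fun t _ => ?_
    have hrest : ∏ s ∈ Finset.univ \ {t}, mu (Function.update a t (a t + a0) s) (ψ s)
        = ∏ s ∈ Finset.univ \ {t}, (mu (a s) (ψ s) : MvPolynomial (Fin m × Fin n) K) :=
      Finset.prod_congr rfl fun s hs => by
        rw [Function.update_of_ne (Finset.notMem_singleton.mp (Finset.mem_sdiff.mp hs).2)]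
    rw [Finset.prod_eq_mul_prod_sdiff_singleton_of_mem (Finset.mem_univ t)
        (fun s => mu (Function.update a t (a t + a0) s) (ψ s)),
      hrest, Function.update_self, mu_add,
      Finset.prod_eq_mul_prod_sdiff_singleton_of_mem (Finset.mem_univ t)
        (fun s => (mu (a s) (ψ s) : MvPolynomial (Fin m × Fin n) K))]
    ring
  have main : polPowerSum K m n a0 * (Esum a : MvPolynomial (Fin m × Fin n) K)
      = Esum (Fin.cons a0 a) + ∑ t, Esum (Function.update a t (a t + a0)) := by
    rw [hA, hB, polPowerSum_eq, Esum, Finset.sum_mul_sum, Finset.sum_comm,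
      ← Finset.sum_add_distrib]
    refine Finset.sum_congr rfl fun ψ _ => ?_
    rw [← Finset.sum_sdiff (Finset.subset_univ (Finset.image ψ Finset.univ))]
  rw [main]; ring

variable (A : Subalgebra K (MvPolynomial (Fin m × Fin n) K))

lemma sum_pos_of_ne_zero {c : Fin m → ℕ} (hc : c ≠ 0) : 0 < ∑ i, c i := by
  rcases Nat.eq_zero_or_pos (∑ i, c i) with h | h
  · exfalso
    apply hc
    funext i
    have := Finset.sum_eq_zero_iff.mp h i (Finset.mem_univ i)
    simpa using this
  · exact h

lemma total_update {ℓ : ℕ} (a : Fin ℓ → (Fin m → ℕ)) (t : Fin ℓ) (v : Fin m → ℕ) :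
    ∑ s, ∑ i, Function.update a t v s i
      = (∑ i, v i) + ∑ s ∈ Finset.univ \ {t}, ∑ i, a s i := by
  have h : (fun s => ∑ i, Function.update a t v s i)
      = Function.update (fun s => ∑ i, a s i) t (∑ i, v i) := by
    funext s
    by_cases hst : s = t
    · subst hst; simp
    · simp [Function.update_of_ne hst]
  rw [show (∑ s, ∑ i, Function.update a t v s i)
      = ∑ s, Function.update (fun s => ∑ i, a s i) t (∑ i, v i) s from by rw [← h]]
  rw [Finset.sum_update_of_mem (Finset.mem_univ t)]

lemma sum_update {ℓ : ℕ} (a : Fin ℓ → (Fin m → ℕ)) (t : Fin ℓ) (v : Fin m → ℕ) :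
    ∑ s, Function.update a t v s = v + ∑ s ∈ Finset.univ \ {t}, a s := by
  rw [Finset.sum_update_of_mem (Finset.mem_univ t)]

/-- If all power sums of total degree at most the total degree of `a` lie in `A`,
then so does `Esum a`. -/
lemma Esum_mem : ∀ {ℓ : ℕ} (a : Fin ℓ → (Fin m → ℕ)),
    (∀ c : Fin m → ℕ, (∑ i, c i) ≤ ∑ t, ∑ i, a t i → polPowerSum K m n c ∈ A) →
    (Esum a : MvPolynomial (Fin m × Fin n) K) ∈ A := by
  intro ℓ
  induction ℓ with
  | zero =>
    intro a _
    have h : (Esum a : MvPolynomial (Fin m × Fin n) K) = 1 := by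
      rw [Esum, Finset.filter_true_of_mem (fun φ _ => Function.injective_of_subsingleton φ)]
      simp
    rw [h]; exact one_mem A
  | succ ℓ ih =>
    intro a H
    have htot : ∑ t, ∑ i, a t i = (∑ i, a 0 i) + ∑ t, ∑ i, Fin.tail a t i := by
      rw [Fin.sum_univ_succ]; rfl
    rw [← Fin.cons_self_tail a, Esum_cons]
    refine sub_mem (mul_mem ?_ ?_) (sum_mem fun t _ => ?_)
    · exact H (a 0) (by omega)
    · exact ih (Fin.tail a) fun c hc => H c (by omega)
    · refine ih _ fun c hc => H c ?_
      rw [total_update] at hc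
      have h1 : ∑ i, (Fin.tail a t + a 0) i = (∑ i, Fin.tail a t i) + ∑ i, a 0 i := by
        simp [Finset.sum_add_distrib]
      have h2 : ∑ s, ∑ i, Fin.tail a s i
          = (∑ i, Fin.tail a t i) + ∑ s ∈ Finset.univ \ {t}, ∑ i, Fin.tail a s i :=
        Finset.sum_eq_add_sum_sdiff_singleton_of_mem (Finset.mem_univ t) _
      omega

set_option maxHeartbeats 1000000 in
/-- Key congruence: for a tuple of `k+1` nonzero exponent vectors of total degree `d`,
assuming all power sums of degree `< d` lie in `A`,
`Esum a` agrees with `(-1)^k k! • polPowerSum (∑ a)` modulo `A`. -/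
lemma Esum_sub_mem (d : ℕ) (H : ∀ c : Fin m → ℕ, (∑ i, c i) < d → polPowerSum K m n c ∈ A) :
    ∀ (k : ℕ) (a : Fin (k + 1) → (Fin m → ℕ)), (∀ t, a t ≠ 0) →
      (∑ t, ∑ i, a t i) = d →
      (Esum a : MvPolynomial (Fin m × Fin n) K)
        - ((-1) ^ k * (k.factorial : ℤ)) • polPowerSum K m n (∑ t, a t) ∈ A := by
  intro k
  induction k with
  | zero =>
    intro a _ _
    haveI : Subsingleton (Fin (0 + 1)) := Fin.subsingleton_one
    have h1 : (Esum a : MvPolynomial (Fin m × Fin n) K) = polPowerSum K m n (a 0) := by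
      rw [Esum, Finset.filter_true_of_mem (fun φ _ => Function.injective_of_subsingleton φ),
        polPowerSum_eq]
      refine Fintype.sum_bijective (fun φ : Fin (0 + 1) → Fin n => φ 0) ⟨?_, ?_⟩ _ _ ?_
      · intro φ ψ hφψ
        funext t
        rw [Subsingleton.elim t 0]
        exact hφψ
      · intro j
        exact ⟨fun _ => j, rfl⟩
      · intro φ
        exact Fin.prod_univ_one _
    have h2 : ∑ t, a t = a 0 := Fin.sum_univ_one _
    rw [h1, h2]
    simpa using zero_mem A
  | succ k ih =>
    intro a ha htot
    set c : ℤ := (-1) ^ k * (k.factorial : ℤ) with hc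
    have hb : ∑ t, a t = a 0 + ∑ t, Fin.tail a t := by
      rw [Fin.sum_univ_succ]; rfl
    have htot' : ∑ t, ∑ i, a t i = (∑ i, a 0 i) + ∑ t, ∑ i, Fin.tail a t i := by
      rw [Fin.sum_univ_succ]; rfl
    have htail_pos : 0 < ∑ t, ∑ i, Fin.tail a t i := by
      have h0 : 0 < ∑ i, Fin.tail a 0 i := sum_pos_of_ne_zero (ha 1)
      calc 0 < ∑ i, Fin.tail a 0 i := h0
        _ ≤ ∑ t, ∑ i, Fin.tail a t i :=
          Finset.single_le_sum (f := fun t => ∑ i, Fin.tail a t i)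
            (fun t _ => Nat.zero_le _) (Finset.mem_univ 0)
    have ha0_pos : 0 < ∑ i, a 0 i := sum_pos_of_ne_zero (ha 0)
    have hE : (Esum a : MvPolynomial (Fin m × Fin n) K)
        = polPowerSum K m n (a 0) * Esum (Fin.tail a)
          - ∑ t, Esum (Function.update (Fin.tail a) t (Fin.tail a t + a 0)) := by
      conv_lhs => rw [← Fin.cons_self_tail a]
      rw [Esum_cons]
    have h1 : polPowerSum K m n (a 0) ∈ A := H (a 0) (by omega)
    have h2 : (Esum (Fin.tail a) : MvPolynomial (Fin m × Fin n) K) ∈ A :=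
      Esum_mem A (Fin.tail a) fun c' hc' => H c' (by omega)
    have h3 : ∀ t : Fin (k + 1),
        (Esum (Function.update (Fin.tail a) t (Fin.tail a t + a 0))
            : MvPolynomial (Fin m × Fin n) K)
          - c • polPowerSum K m n (∑ t, a t) ∈ A := by
      intro t
      have hsum : ∑ s, Function.update (Fin.tail a) t (Fin.tail a t + a 0) s = ∑ s, a s := by
        rw [sum_update, hb]
        have h4 : ∑ s, Fin.tail a s
            = Fin.tail a t + ∑ s ∈ Finset.univ \ {t}, Fin.tail a s :=
          Finset.sum_eq_add_sum_sdiff_singleton_of_mem (Finset.mem_univ t) _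
        rw [h4]
        abel
      have hnz : ∀ s, Function.update (Fin.tail a) t (Fin.tail a t + a 0) s ≠ 0 := by
        intro s
        by_cases hst : s = t
        · subst hst
          simp only [Function.update_self]
          intro hzero
          apply ha 0
          funext i
          have := congrFun hzero i
          simp only [Pi.add_apply, Pi.zero_apply] at this ⊢
          omega
        · rw [Function.update_of_ne hst]
          exact ha s.succ
      have htotu : ∑ s, ∑ i, Function.update (Fin.tail a) t (Fin.tail a t + a 0) s i = d := by
        have h := congrArg (fun v => ∑ i, v i) hsum
        simp only [Finset.sum_apply] at h
        rw [Finset.sum_comm, h, Finset.sum_comm]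
        exact htot
      have := ih (Function.update (Fin.tail a) t (Fin.tail a t + a 0)) hnz htotu
      rwa [hsum] at this
    rw [hE]
    have key : polPowerSum K m n (a 0) * (Esum (Fin.tail a) : MvPolynomial (Fin m × Fin n) K)
          - (∑ t, Esum (Function.update (Fin.tail a) t (Fin.tail a t + a 0)))
          - ((-1) ^ (k + 1) * ((k + 1).factorial : ℤ)) • polPowerSum K m n (∑ t, a t)
        = polPowerSum K m n (a 0) * Esum (Fin.tail a)
          - ∑ t : Fin (k + 1),
              (Esum (Function.update (Fin.tail a) t (Fin.tail a t + a 0))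
                - c • polPowerSum K m n (∑ t, a t)) := by
      rw [Finset.sum_sub_distrib, Finset.sum_const, Finset.card_univ, Fintype.card_fin]
      have hcoe : ((k + 1) • (c • polPowerSum K m n (∑ t, a t))
            : MvPolynomial (Fin m × Fin n) K)
          = (-((-1) ^ (k + 1) * ((k + 1).factorial : ℤ))) • polPowerSum K m n (∑ t, a t) := by
        rw [← natCast_zsmul, smul_smul]
        congr 1
        rw [hc]
        push_cast [Nat.factorial_succ]
        ring
      rw [hcoe, neg_smul]
      abel
    rw [key]
    exact sub_mem (mul_mem h1 h2) (sum_mem fun t _ => h3 t)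

/-- Decompose a vector of total degree `≥ k+1` into `k+1` nonzero vectors. -/
lemma exists_decomp : ∀ (k : ℕ) (b : Fin m → ℕ), k + 1 ≤ ∑ i, b i →
    ∃ a : Fin (k + 1) → (Fin m → ℕ), (∀ t, a t ≠ 0) ∧ ∑ t, a t = b := by
  intro k
  induction k with
  | zero =>
    intro b hb
    have hb0 : b ≠ 0 := by
      intro h
      rw [h] at hb
      simp at hb
    exact ⟨fun _ => b, fun t hbz => hb0 hbz, by simp⟩
  | succ k ih =>
    intro b hb
    have hex : ∃ i, b i ≠ 0 := by
      by_contra h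
      push_neg at h
      have : ∑ i, b i = 0 := Finset.sum_eq_zero fun i _ => h i
      omega
    obtain ⟨i, hi⟩ := hex
    set b' : Fin m → ℕ := Function.update b i (b i - 1) with hb'
    have hs := Finset.sum_eq_add_sum_sdiff_singleton_of_mem (Finset.mem_univ i) b
    have hsum' : ∑ j, b' j + 1 = ∑ j, b j := by
      rw [hb', Finset.sum_update_of_mem (Finset.mem_univ i), hs]
      omega
    obtain ⟨a', ha'nz, ha'sum⟩ := ih b' (by omega)
    refine ⟨Fin.cons (Pi.single i 1) a', ?_, ?_⟩
    · intro t
      refine Fin.cases ?_ ?_ t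
      · intro h
        have := congrFun h i
        simp at this
      · intro s h
        exact ha'nz s (by simpa using h)
    · rw [Fin.sum_univ_succ]
      simp only [Fin.cons_zero, Fin.cons_succ]
      rw [ha'sum]
      funext j
      by_cases hji : j = i
      · subst hji
        simp only [Pi.add_apply, Pi.single_eq_same, hb', Function.update_self]
        omega
      · simp [hb', Function.update_of_ne hji, Pi.single_eq_of_ne hji]

end MultiSymmAux

namespace MultiSymmAux

variable {K : Type*} [Field K] {m n : ℕ}

/-- All polarized power sums lie in any subalgebra containing those of degree at most `n`. -/
lemma polPowerSum_mem (hn : IsUnit (n.factorial : K))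
    (A : Subalgebra K (MvPolynomial (Fin m × Fin n) K))
    (hgen : ∀ a : Fin m → ℕ, a ≠ 0 → (∑ i, a i) ≤ n → polPowerSum K m n a ∈ A)
    (b : Fin m → ℕ) : polPowerSum K m n b ∈ A := by
  suffices H : ∀ d (b : Fin m → ℕ), (∑ i, b i) = d → polPowerSum K m n b ∈ A from
    H _ b rfl
  intro d
  induction d using Nat.strong_induction_on with
  | _ d ihd =>
    intro b hbd
    by_cases hbz : b = 0
    · subst hbz
      have h : polPowerSum K m n (0 : Fin m → ℕ)
          = n • (1 : MvPolynomial (Fin m × Fin n) K) := by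
        simp [polPowerSum]
      rw [h]
      exact nsmul_mem (one_mem A) n
    by_cases hdn : d ≤ n
    · exact hgen b hbz (hbd ▸ hdn)
    push_neg at hdn
    have hd1 : n + 1 ≤ ∑ i, b i := by omega
    obtain ⟨a, hanz, hasum⟩ := exists_decomp n b hd1
    have H' : ∀ c : Fin m → ℕ, (∑ i, c i) < d → polPowerSum K m n c ∈ A :=
      fun c hcd => ihd _ hcd c rfl
    have htot : ∑ t, ∑ i, a t i = d := by
      have h := congrArg (fun v => ∑ i, v i) hasum
      simp only [Finset.sum_apply] at h
      rw [Finset.sum_comm, h]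
      exact hbd
    have hkey := Esum_sub_mem A d H' n a hanz htot
    rw [Esum_eq_zero (Nat.lt_succ_self n), hasum, zero_sub] at hkey
    have hmem : ((-1 : ℤ) ^ n * (n.factorial : ℤ)) • polPowerSum K m n b ∈ A := by
      have h := neg_mem hkey
      rwa [neg_neg] at h
    set v : K := (((-1 : ℤ) ^ n * (n.factorial : ℤ) : ℤ) : K) with hv
    have hvu : IsUnit v := by
      rw [hv]
      push_cast
      exact ((isUnit_one.neg).pow n).mul hn
    have hmem' : v • polPowerSum K m n b ∈ A := by
      rw [hv, Int.cast_smul_eq_zsmul]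
      exact hmem
    have h : polPowerSum K m n b = v⁻¹ • (v • polPowerSum K m n b) := by
      rw [smul_smul, inv_mul_cancel₀ hvu.ne_zero, one_smul]
    rw [h]
    exact A.smul_mem hmem' _

lemma rename_mu (σ : Equiv.Perm (Fin n)) (a : Fin m → ℕ) (j : Fin n) :
    rename (fun p : Fin m × Fin n => (p.1, σ p.2)) (mu a j : MvPolynomial (Fin m × Fin n) K)
      = mu a (σ j) := by
  simp [mu]

lemma monomial_eq_prod_mu (M : (Fin m × Fin n) →₀ ℕ) :
    (monomial M (1 : K) : MvPolynomial (Fin m × Fin n) K)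
      = ∏ j : Fin n, mu (fun i => M (i, j)) j := by
  rw [monomial_eq, C_1, one_mul, Finsupp.prod_fintype _ _ (by simp)]
  rw [Fintype.prod_prod_type, Finset.prod_comm]
  rfl

lemma reynolds_monomial (M : (Fin m × Fin n) →₀ ℕ) :
    ∑ σ : Equiv.Perm (Fin n),
        rename (fun p : Fin m × Fin n => (p.1, σ p.2)) (monomial M (1 : K))
      = Esum (fun j i => M (i, j)) := by
  have himg : (Finset.univ.filter (fun φ : Fin n → Fin n => Function.Injective φ))
      = Finset.image (fun σ : Equiv.Perm (Fin n) => ⇑σ) Finset.univ := by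
    ext φ
    simp only [Finset.mem_filter, Finset.mem_univ, true_and, Finset.mem_image]
    constructor
    · intro hφ
      exact ⟨Equiv.ofBijective φ (Finite.injective_iff_bijective.mp hφ), rfl⟩
    · rintro ⟨σ, -, rfl⟩
      exact σ.injective
  rw [Esum, himg, Finset.sum_image (fun x _ y _ h => Equiv.coe_fn_injective h)]
  refine (Finset.sum_congr rfl fun σ _ => ?_).symm.symm
  rw [monomial_eq_prod_mu, map_prod]
  exact Finset.prod_congr rfl fun j _ => rename_mu σ _ j

/-- Every multisymmetric polynomial is a combination of the `Esum`s of its monomials. -/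
lemma reynolds (f : MvPolynomial (Fin m × Fin n) K) (hf : IsMultiSymm f) :
    (n.factorial : ℕ) • f
      = ∑ M ∈ f.support, coeff M f • Esum (fun j i => M (i, j)) := by
  have h1 : ∑ σ : Equiv.Perm (Fin n),
      rename (fun p : Fin m × Fin n => (p.1, σ p.2)) f = (n.factorial : ℕ) • f := by
    rw [Finset.sum_congr rfl fun σ _ => hf σ, Finset.sum_const, Finset.card_univ,
      Fintype.card_perm, Fintype.card_fin]
  have h2 : ∀ σ : Equiv.Perm (Fin n),
      rename (fun p : Fin m × Fin n => (p.1, σ p.2)) f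
        = ∑ M ∈ f.support, coeff M f •
            rename (fun p : Fin m × Fin n => (p.1, σ p.2)) (monomial M (1 : K)) := by
    intro σ
    conv_lhs => rw [← support_sum_monomial_coeff f]
    rw [map_sum]
    refine Finset.sum_congr rfl fun M _ => ?_
    rw [← map_smul]
    congr 1
    rw [smul_monomial, smul_eq_mul, mul_one]
  rw [← h1, Finset.sum_congr rfl fun σ _ => h2 σ, Finset.sum_comm]
  refine Finset.sum_congr rfl fun M _ => ?_
  rw [← reynolds_monomial, Finset.smul_sum]

/-- The invariants form a subalgebra. -/
def invariantAlg (K : Type*) [CommRing K] (m n : ℕ) :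
    Subalgebra K (MvPolynomial (Fin m × Fin n) K) where
  carrier := {f | IsMultiSymm f}
  mul_mem' := fun {a b} ha hb σ => by rw [map_mul, ha σ, hb σ]
  add_mem' := fun {a b} ha hb σ => by rw [map_add, ha σ, hb σ]
  algebraMap_mem' := fun r σ => by
    simp [algebraMap_eq, rename_C]

lemma mem_invariantAlg {f : MvPolynomial (Fin m × Fin n) K} :
    f ∈ invariantAlg K m n ↔ IsMultiSymm f := Iff.rfl

end MultiSymmAux

open MultiSymmAux in
/-- If `n!` is invertible in the field `K`, then the algebra of multisymmetric polynomials
`K[V^m]^{S_n}` is generated as a `K`-algebra by the polarized power sums `[w]`, where `w`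
ranges over the nonempty monomials in `x(1), …, x(m)` of total degree at most `n`. -/
theorem multisymm_generated_by_low_degree_power_sums
    (K : Type*) [Field K] (m n : ℕ) (hn : IsUnit (n.factorial : K)) :
    (Algebra.adjoin K {f : MvPolynomial (Fin m × Fin n) K |
        ∃ a : Fin m → ℕ, a ≠ 0 ∧ (∑ i, a i) ≤ n ∧ f = polPowerSum K m n a} :
      Set (MvPolynomial (Fin m × Fin n) K)) = {f | IsMultiSymm f} := by
  ext f
  simp only [SetLike.mem_coe, Set.mem_setOf_eq]
  constructor
  · intro hf
    have hle : Algebra.adjoin K {f : MvPolynomial (Fin m × Fin n) K |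
        ∃ a : Fin m → ℕ, a ≠ 0 ∧ (∑ i, a i) ≤ n ∧ f = polPowerSum K m n a}
        ≤ invariantAlg K m n := by
      apply Algebra.adjoin_le
      rintro g ⟨a, -, -, rfl⟩
      intro σ
      rw [polPowerSum, map_sum]
      rw [show (∑ j : Fin n,
          rename (fun p : Fin m × Fin n => (p.1, σ p.2)) (∏ i : Fin m, X (i, j) ^ a i))
        = ∑ j : Fin n, ∏ i : Fin m, (X (i, σ j) ^ a i : MvPolynomial (Fin m × Fin n) K)
        from Finset.sum_congr rfl fun j _ => by simp]
      exact Equiv.sum_comp σ fun j => ∏ i : Fin m, X (i, j) ^ a i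
    exact hle hf
  · intro hf
    have hEmem : ∀ M : (Fin m × Fin n) →₀ ℕ,
        (Esum (fun j i => M (i, j)) : MvPolynomial (Fin m × Fin n) K)
          ∈ Algebra.adjoin K {f : MvPolynomial (Fin m × Fin n) K |
              ∃ a : Fin m → ℕ, a ≠ 0 ∧ (∑ i, a i) ≤ n ∧ f = polPowerSum K m n a} := by
      intro M
      refine Esum_mem _ _ fun c _ => ?_
      refine polPowerSum_mem hn _ ?_ c
      intro a hanz hale
      exact Algebra.subset_adjoin ⟨a, hanz, hale, rfl⟩
    have hne : (n.factorial : K) ≠ 0 := hn.ne_zero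
    have key := reynolds f hf
    have h : f = (n.factorial : K)⁻¹ •
        ∑ M ∈ f.support, coeff M f • (Esum (fun j i => M (i, j))
          : MvPolynomial (Fin m × Fin n) K) := by
      rw [← key, ← Nat.cast_smul_eq_nsmul K, smul_smul, inv_mul_cancel₀ hne, one_smul]
    rw [h]
    exact Subalgebra.smul_mem _ (sum_mem fun M _ =>
      Subalgebra.smul_mem _ (hEmem M) _) _
end

section
/- Let K be any commutative ring. The products σ_{r_1}(w_1)···σ_{r_d}(w_d), where {w_1,...,w_d; r_1,...,r_d} ranges over multisets of distinct nonempty monomials w_i in x(1),...,x(m) with multiplicities r_i satisfying r_1 + ··· + r_d ≤ n, form a free K-module basis of the ring of multisymmetric functions K[V^m]^{S_n}. -/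
/-!
Record the exponent `d` of a monomial in the variables `x(i)_j` as an `m × n` matrix. The
multiset of its nonzero columns determines `d` up to permuting columns, so the coefficients of a
multisymmetric polynomial are constant on these classes. Expanding
`∏_k σ_{r_k}(w_k)` as a sum over choices of column sets `q_k` with `|q_k| = r_k`, each monomial
has at most `∑_k r_k` nonzero columns, with equality exactly when the `q_k` are disjoint, and
then its nonzero columns are the multiset `{w_k^{r_k}}`. So on monomials with at
least that many nonzero columns the product is the indicator of its own class: the family is
unitriangular against orbit sums, ordered by number of nonzero columns. Linear independence and
spanning both follow by looking at the classes with the most nonzero columns.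
-/

open MvPolynomial

/-- `σ_l(w)`: the `l`-th elementary symmetric polynomial of the substitutions
`w_{⟨1⟩}, …, w_{⟨n⟩}` of the monomial `w = x(1)^{a 1} ⋯ x(m)^{a m}`, where
`w_{⟨j⟩} = ∏_i x(i)_j^{a i}`. -/
noncomputable def sigmaMon (K : Type*) [CommRing K] (m n : ℕ) (l : ℕ) (a : Fin m → ℕ) :
    MvPolynomial (Fin m × Fin n) K :=
  ∑ S ∈ Finset.univ.powersetCard l, ∏ j ∈ S, ∏ i : Fin m, X (i, j) ^ a i

open Finset

namespace MultiSymm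

def subalgebra (K : Type*) [CommRing K] (m n : ℕ) :
    Subalgebra K (MvPolynomial (Fin m × Fin n) K) where
  carrier := {f | IsMultiSymm f}
  mul_mem' hf hg σ := by rw [map_mul, hf σ, hg σ]
  add_mem' hf hg σ := by rw [map_add, hf σ, hg σ]
  algebraMap_mem' c σ := (rename _).commutes c

variable {m n : ℕ}

def column (d : Fin m × Fin n →₀ ℕ) (j : Fin n) : Fin m → ℕ := fun i => d (i, j)

def columnIndices (d : Fin m × Fin n →₀ ℕ) (a : Fin m → ℕ) : Finset (Fin n) :=
  {j | column d j = a}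

def nonzeroColumns (d : Fin m × Fin n →₀ ℕ) : Multiset (Fin m → ℕ) :=
  (univ.filter (column d · ≠ 0)).val.map (column d)

noncomputable def ofColumns (c : Fin n → Fin m → ℕ) : Fin m × Fin n →₀ ℕ :=
  Finsupp.equivFunOnFinite.symm fun p => c p.2 p.1

noncomputable def ofMultiset (M : Multiset (Fin m → ℕ)) : Fin m × Fin n →₀ ℕ :=
  ofColumns fun j => M.toList.getD j 0

@[simp] theorem mem_columnIndices {d : Fin m × Fin n →₀ ℕ} {a : Fin m → ℕ} {j : Fin n} :
    j ∈ columnIndices d a ↔ column d j = a := by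
  simp [columnIndices]

theorem card_nonzeroColumns (d : Fin m × Fin n →₀ ℕ) :
    (nonzeroColumns d).card = #{j | column d j ≠ 0} :=
  Multiset.card_map _ _

theorem card_nonzeroColumns_le (d : Fin m × Fin n →₀ ℕ) : (nonzeroColumns d).card ≤ n := by
  simpa [card_nonzeroColumns] using card_filter_le univ (column d · ≠ 0)

theorem ne_zero_of_mem_nonzeroColumns {d : Fin m × Fin n →₀ ℕ} {a : Fin m → ℕ}
    (ha : a ∈ nonzeroColumns d) : a ≠ 0 := by
  obtain ⟨j, hj, rfl⟩ := Multiset.mem_map.1 ha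
  exact (mem_filter.1 (mem_def.2 hj)).2

theorem column_mem_nonzeroColumns {d : Fin m × Fin n →₀ ℕ} {j : Fin n} (hj : column d j ≠ 0) :
    column d j ∈ nonzeroColumns d :=
  Multiset.mem_map_of_mem _ (mem_filter.2 ⟨mem_univ j, hj⟩)

theorem count_nonzeroColumns {d : Fin m × Fin n →₀ ℕ} {a : Fin m → ℕ} (ha : a ≠ 0) :
    (nonzeroColumns d).count a = #(columnIndices d a) := by
  rw [nonzeroColumns, Multiset.count_map, ← filter_val, filter_filter, columnIndices]
  congr 2 with j
  grind

theorem card_columnIndices_eq {d d' : Fin m × Fin n →₀ ℕ}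
    (h : nonzeroColumns d = nonzeroColumns d') (a : Fin m → ℕ) :
    #(columnIndices d a) = #(columnIndices d' a) := by
  rcases eq_or_ne a 0 with rfl | ha
  · have hcard := congrArg Multiset.card h
    simp only [card_nonzeroColumns, ne_eq] at hcard
    have := card_filter_add_card_filter_not (s := univ) (column d · = 0)
    have := card_filter_add_card_filter_not (s := univ) (column d' · = 0)
    simp only [columnIndices]
    omega
  · rw [← count_nonzeroColumns ha, h, count_nonzeroColumns ha]

theorem exists_perm_of_nonzeroColumns_eq {d d' : Fin m × Fin n →₀ ℕ}
    (h : nonzeroColumns d = nonzeroColumns d') :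
    ∃ σ : Equiv.Perm (Fin n), ∀ j, column d' j = column d (σ j) := by
  have e : ∀ a, {j // column d' j = a} ≃ {j // column d j = a} := fun a =>
    Fintype.equivOfCardEq (by
      rw [Fintype.card_subtype, Fintype.card_subtype]
      exact card_columnIndices_eq h.symm a)
  exact ⟨Equiv.ofFiberEquiv e, fun j => (Equiv.ofFiberEquiv_map e j).symm⟩

theorem nonzeroColumns_ofMultiset {M : Multiset (Fin m → ℕ)} (hM : M.card ≤ n)
    (h0 : ∀ a ∈ M, a ≠ 0) : nonzeroColumns (ofMultiset M : Fin m × Fin n →₀ ℕ) = M := by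
  have hcols : List.ofFn (fun j : Fin n => M.toList.getD j 0) =
      M.toList ++ List.replicate (n - M.toList.length) 0 := by
    refine List.ext_getElem (by simp; omega) fun j _ _ => ?_
    simp only [List.getElem_ofFn, List.getD_eq_getElem?_getD, List.getElem_append]
    split_ifs with hj
    · simp [List.getElem?_eq_getElem hj]
    · simp [List.getElem?_eq_none (not_lt.1 hj)]
  calc nonzeroColumns (ofMultiset M : Fin m × Fin n →₀ ℕ)
      = (univ.val.map fun j : Fin n => M.toList.getD j 0).filter (· ≠ 0) := by
        rw [Multiset.filter_map]; rfl
    _ = M := by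
        rw [Fin.univ_val_map, hcols, ← Multiset.coe_add, Multiset.filter_add,
          Multiset.coe_toList, Multiset.filter_eq_self.2 h0]
        simp

section Placement

variable {ι : Type*} [Fintype ι] (w : ι → Fin m → ℕ) (q : ι → Finset (Fin n))

theorem sum_card_eq_sum_card_filter_mem : ∑ a, #(q a) = ∑ j, #{a | j ∈ q a} := by
  simp only [card_filter]
  rw [sum_comm]
  simp

theorem ite_sum_ne_zero_le_card_filter_mem (j : Fin n) :
    (if ∑ a with j ∈ q a, w a ≠ 0 then 1 else 0) ≤ #{a | j ∈ q a} := by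
  split_ifs with h
  · exact card_pos.2 (nonempty_of_sum_ne_zero h)
  · exact Nat.zero_le _

theorem card_filter_sum_ne_zero_le_sum_card :
    #{j | ∑ a with j ∈ q a, w a ≠ 0} ≤ ∑ a, #(q a) := by
  rw [card_filter, sum_card_eq_sum_card_filter_mem]
  exact sum_le_sum fun j _ => ite_sum_ne_zero_le_card_filter_mem w q j

theorem card_filter_mem_le_one (h : ∑ a, #(q a) ≤ #{j | ∑ a with j ∈ q a, w a ≠ 0})
    (j : Fin n) : #{a | j ∈ q a} ≤ 1 := by
  rw [card_filter, sum_card_eq_sum_card_filter_mem] at h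
  have hj := (sum_eq_sum_iff_of_le fun j _ => ite_sum_ne_zero_le_card_filter_mem w q j).1
    (h.antisymm' (sum_le_sum fun j _ => ite_sum_ne_zero_le_card_filter_mem w q j)) j (mem_univ j)
  rw [← hj]
  split_ifs <;> simp

theorem sum_filter_mem_eq_of_card_le_one {j : Fin n} (hj : #{a | j ∈ q a} ≤ 1) {a : ι}
    (ha : j ∈ q a) : ∑ b with j ∈ q b, w b = w a :=
  sum_eq_single_of_mem a (by simpa using ha) fun b hb hba =>
    absurd (card_le_one.1 hj b hb a (by simpa using ha)) hba

end Placement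

section Choices

variable {M : Multiset (Fin m → ℕ)} {d : Fin m × Fin n →₀ ℕ}

theorem sum_card_eq_card_of_card_eq_count (q : M.toFinset → Finset (Fin n))
    (hq : ∀ a, #(q a) = M.count a.1) : ∑ a, #(q a) = M.card := by
  simp only [hq]
  exact (sum_coe_sort M.toFinset (M.count ·)).trans (Multiset.toFinset_sum_count_eq M)

theorem nonzeroColumns_eq_and_eq_columnIndices (h0 : ∀ a ∈ M, a ≠ 0)
    (hd : M.card ≤ (nonzeroColumns d).card) {q : M.toFinset → Finset (Fin n)}
    (hq : ∀ a, #(q a) = M.count a.1) (hqd : ofColumns (fun j => ∑ a with j ∈ q a, a.1) = d) :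
    nonzeroColumns d = M ∧ q = fun a => columnIndices d a.1 := by
  have hcol : ∀ j, column d j = ∑ a with j ∈ q a, a.1 := fun j => by rw [← hqd]; rfl
  have hsum := sum_card_eq_card_of_card_eq_count q hq
  have hcard : #{j | column d j ≠ 0} = M.card := by
    refine le_antisymm ?_ (card_nonzeroColumns d ▸ hd)
    simpa only [hcol, hsum] using card_filter_sum_ne_zero_le_sum_card _ q
  have hdisj := card_filter_mem_le_one (fun a => a.1) q (by simpa only [hcol, hsum] using hcard.ge)
  have hsub : ∀ a, q a ⊆ columnIndices d a.1 := fun a j hj => by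
    simpa [hcol] using sum_filter_mem_eq_of_card_le_one (fun a => a.1) q (hdisj j) hj
  have hM : nonzeroColumns d = M := by
    refine (Multiset.eq_of_le_of_card_le (Multiset.le_iff_count.2 fun a => ?_) ?_).symm
    · by_cases ha : a ∈ M
      · rw [count_nonzeroColumns (h0 a ha), ← hq ⟨a, Multiset.mem_toFinset.2 ha⟩]
        exact card_le_card (hsub _)
      · simp [Multiset.count_eq_zero_of_notMem ha]
    · rw [card_nonzeroColumns, hcard]
  refine ⟨hM, funext fun a => eq_of_subset_of_card_le (hsub a) ?_⟩
  rw [hq, ← count_nonzeroColumns (h0 a (Multiset.mem_toFinset.1 a.2)), hM]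

theorem ofColumns_sum_filter_mem_columnIndices (hM : nonzeroColumns d = M) :
    ofColumns (fun j => ∑ a : M.toFinset with j ∈ columnIndices d a.1, a.1) = d := by
  suffices h : ∀ j, ∑ a : M.toFinset with j ∈ columnIndices d a.1, a.1 = column d j by
    ext ⟨i, j⟩; exact congrFun (h j) i
  intro j
  by_cases hj : column d j ∈ M.toFinset
  · refine sum_eq_single_of_mem (⟨column d j, hj⟩ : M.toFinset) (by simp) fun b hb hne => ?_
    exact absurd (Subtype.ext (mem_columnIndices.1 (mem_filter.1 hb).2).symm) hne
  · rw [filter_false_of_mem fun a _ ha => hj (mem_columnIndices.1 ha ▸ a.2), sum_empty]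
    by_contra hne
    exact hj (Multiset.mem_toFinset.2 (hM ▸ column_mem_nonzeroColumns (Ne.symm hne)))

end Choices

variable {K : Type*} [CommRing K]

theorem IsMultiSymm.coeff_eq_of_nonzeroColumns_eq {f : MvPolynomial (Fin m × Fin n) K}
    (hf : IsMultiSymm f) {d d' : Fin m × Fin n →₀ ℕ}
    (h : nonzeroColumns d = nonzeroColumns d') : coeff d f = coeff d' f := by
  obtain ⟨σ, hσ⟩ := exists_perm_of_nonzeroColumns_eq h
  let e : Fin m × Fin n ≃ Fin m × Fin n := (Equiv.refl _).prodCongr σ⁻¹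
  have hd' : d' = d.mapDomain e := by
    ext ⟨i, j⟩
    rw [Finsupp.mapDomain_equiv_apply]
    exact congrFun (hσ j) i
  have hfe : rename e f = f := hf σ⁻¹
  rw [hd', ← coeff_rename_mapDomain e e.injective, hfe]

theorem sigmaMon_eq_aeval_esymm (l : ℕ) (a : Fin m → ℕ) :
    sigmaMon K m n l a = aeval (fun j => ∏ i, X (i, j) ^ a i) (esymm (Fin n) K l) := by
  simp [sigmaMon, esymm, map_sum, map_prod]

theorem isMultiSymm_sigmaMon (l : ℕ) (a : Fin m → ℕ) : IsMultiSymm (sigmaMon K m n l a) := by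
  intro σ
  rw [sigmaMon_eq_aeval_esymm, ← AlgHom.comp_apply, comp_aeval]
  simp only [map_prod, map_pow, rename_X]
  conv_rhs => rw [← esymm_isSymmetric (Fin n) K l σ, aeval_rename]
  rfl

theorem prod_prod_X_pow_eq_monomial {ι : Type*} [Fintype ι] (w : ι → Fin m → ℕ)
    (q : ι → Finset (Fin n)) :
    ∏ a, ∏ j ∈ q a, ∏ i, (X (i, j) : MvPolynomial (Fin m × Fin n) K) ^ w a i =
      monomial (ofColumns fun j => ∑ a with j ∈ q a, w a) 1 := by
  classical
  simp only [X_pow_eq_monomial, ← monomial_sum_one]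
  refine congrArg (monomial · (1 : K)) (Finsupp.ext fun ⟨i, j⟩ => ?_)
  simp [ofColumns, Finsupp.single_apply, sum_filter, ite_and]

theorem prod_sigmaMon_eq_sum {ι : Type*} [Fintype ι] [DecidableEq ι] (r : ι → ℕ)
    (w : ι → Fin m → ℕ) :
    ∏ a, sigmaMon K m n (r a) (w a) =
      ∑ q ∈ Fintype.piFinset fun a => powersetCard (r a) univ,
        monomial (ofColumns fun j => ∑ a with j ∈ q a, w a) 1 := by
  simp only [sigmaMon]
  rw [prod_univ_sum]
  exact sum_congr rfl fun q _ => prod_prod_X_pow_eq_monomial w q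

variable (K) in
noncomputable def sigmaProd (M : Multiset (Fin m → ℕ)) : MvPolynomial (Fin m × Fin n) K :=
  ∏ a ∈ M.toFinset, sigmaMon K m n (M.count a) a

theorem coeff_sigmaProd {M : Multiset (Fin m → ℕ)} (h0 : ∀ a ∈ M, a ≠ 0)
    {d : Fin m × Fin n →₀ ℕ} (hd : M.card ≤ (nonzeroColumns d).card) :
    coeff d (sigmaProd K M) = if nonzeroColumns d = M then 1 else 0 := by
  classical
  rw [sigmaProd, ← prod_coe_sort, prod_sigmaMon_eq_sum, coeff_sum]
  simp only [coeff_monomial]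
  set Q := Fintype.piFinset fun a : M.toFinset => powersetCard (M.count a.1) (univ : Finset (Fin n))
  have card_of_mem : ∀ q ∈ Q, ∀ a, #(q a) = M.count a.1 := fun q hq a =>
    mem_powersetCard_univ.1 (Fintype.mem_piFinset.1 hq a)
  split_ifs with hM
  · have hQ : (fun a : M.toFinset => columnIndices d a.1) ∈ Q :=
      Fintype.mem_piFinset.2 fun a => mem_powersetCard_univ.2 <|
        (count_nonzeroColumns (h0 a (Multiset.mem_toFinset.1 a.2))).symm.trans (by rw [hM])
    rw [sum_eq_single_of_mem _ hQ fun q hq hne => if_neg fun h =>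
      hne (nonzeroColumns_eq_and_eq_columnIndices h0 hd (card_of_mem q hq) h).2,
      if_pos (ofColumns_sum_filter_mem_columnIndices hM)]
  · exact sum_eq_zero fun q hq => if_neg fun h =>
      hM (nonzeroColumns_eq_and_eq_columnIndices h0 hd (card_of_mem q hq) h).1

theorem coeff_sum_smul_sigmaProd {T : Finset (Multiset (Fin m → ℕ))}
    (hT : ∀ M ∈ T, ∀ a ∈ M, a ≠ 0) (c : Multiset (Fin m → ℕ) → K) {d : Fin m × Fin n →₀ ℕ}
    (hd : ∀ M ∈ T, M.card ≤ (nonzeroColumns d).card) :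
    coeff d (∑ M ∈ T, c M • sigmaProd K M) =
      if nonzeroColumns d ∈ T then c (nonzeroColumns d) else 0 := by
  rw [coeff_sum, sum_congr rfl fun M hM => by
    rw [coeff_smul, coeff_sigmaProd (hT M hM) (hd M hM), smul_eq_mul, mul_ite, mul_one,
      mul_zero], sum_ite_eq]

variable (m n) in
abbrev BasisIndex : Type := {M : Multiset (Fin m → ℕ) // M.card ≤ n ∧ ∀ a ∈ M, a ≠ 0}

theorem linearIndependent_sigmaProd :
    LinearIndependent K fun M : BasisIndex m n =>
      (sigmaProd K M.1 : MvPolynomial (Fin m × Fin n) K) := by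
  rw [linearIndependent_iff]
  intro l hl
  by_contra hne
  obtain ⟨M₀, hM₀, hmax⟩ :=
    l.support.exists_max_image (fun M => M.1.card) (Finsupp.support_nonempty_iff.2 hne)
  have hM₀cols := nonzeroColumns_ofMultiset (n := n) M₀.2.1 M₀.2.2
  have hother : ∀ M ∈ l.support, M ≠ M₀ → coeff (ofMultiset M₀.1) (l M • sigmaProd K M.1) = 0 :=
    fun M hM hne => by
      rw [coeff_smul, coeff_sigmaProd M.2.2 (hM₀cols ▸ hmax M hM),
        if_neg fun h => hne (Subtype.ext (hM₀cols ▸ h).symm), smul_zero]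
  have hcoeff := congrArg (coeff (ofMultiset M₀.1)) hl
  rw [Finsupp.linearCombination_apply, Finsupp.sum, coeff_sum, coeff_zero,
    sum_eq_single_of_mem M₀ hM₀ hother, coeff_smul,
    coeff_sigmaProd M₀.2.2 (congrArg Multiset.card hM₀cols).ge, if_pos hM₀cols, smul_eq_mul,
    mul_one] at hcoeff
  exact Finsupp.mem_support_iff.1 hM₀ hcoeff

theorem span_sigmaProd_le :
    Submodule.span K (Set.range fun M : BasisIndex m n =>
      (sigmaProd K M.1 : MvPolynomial (Fin m × Fin n) K)) ≤
      Subalgebra.toSubmodule (subalgebra K m n) := by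
  rw [Submodule.span_le]
  rintro _ ⟨M, rfl⟩
  exact Subalgebra.prod_mem (subalgebra K m n) fun a _ => isMultiSymm_sigmaMon _ a

theorem mem_span_sigmaProd_of_card_lt {k : ℕ} {f : MvPolynomial (Fin m × Fin n) K}
    (hf : IsMultiSymm f) (hk : ∀ d ∈ f.support, (nonzeroColumns d).card < k) :
    f ∈ Submodule.span K (Set.range fun M : BasisIndex m n => sigmaProd K M.1) := by
  classical
  induction k generalizing f with
  | zero =>
    simp only [mem_support_iff, Nat.not_lt_zero, imp_false, not_not] at hk
    rw [MvPolynomial.ext f 0 hk]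
    exact zero_mem _
  | succ k ih =>
    -- `s` agrees with `f` on every monomial with `k` or more nonzero columns.
    let T := (f.support.image nonzeroColumns).filter (·.card = k)
    let s : MvPolynomial (Fin m × Fin n) K := ∑ M ∈ T, coeff (ofMultiset M) f • sigmaProd K M
    have hT : ∀ M ∈ T, M.card ≤ n ∧ ∀ a ∈ M, a ≠ 0 := fun M hM => by
      obtain ⟨d, -, rfl⟩ := mem_image.1 (mem_filter.1 hM).1
      exact ⟨card_nonzeroColumns_le d, fun a => ne_zero_of_mem_nonzeroColumns⟩
    have hs : s ∈ Submodule.span K (Set.range fun M : BasisIndex m n => sigmaProd K M.1) :=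
      Submodule.sum_mem _ fun M hM =>
        Submodule.smul_mem _ _ (Submodule.subset_span ⟨⟨M, hT M hM⟩, rfl⟩)
    have hlower : ∀ d ∈ (f - s).support, (nonzeroColumns d).card < k := by
      intro d hd
      by_contra! hkd
      refine mem_support_iff.1 hd ?_
      rw [coeff_sub, coeff_sum_smul_sigmaProd (fun M hM => (hT M hM).2) _
        fun M hM => (mem_filter.1 hM).2 ▸ hkd]
      split_ifs with hdT
      · exact sub_eq_zero.2 (IsMultiSymm.coeff_eq_of_nonzeroColumns_eq hf
          (nonzeroColumns_ofMultiset (hT _ hdT).1 (hT _ hdT).2).symm)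
      · refine (sub_zero _).trans (by_contra fun hne => hdT (mem_filter.2 ⟨?_, ?_⟩))
        · exact mem_image_of_mem _ (mem_support_iff.2 hne)
        · exact le_antisymm (Nat.lt_succ_iff.1 (hk d (mem_support_iff.2 hne))) hkd
    have hfs : f - s ∈ subalgebra K m n := sub_mem hf (span_sigmaProd_le hs)
    simpa using add_mem (ih hfs hlower) hs

theorem span_sigmaProd :
    (Submodule.span K (Set.range fun M : BasisIndex m n =>
      (sigmaProd K M.1 : MvPolynomial (Fin m × Fin n) K)) : Set (MvPolynomial (Fin m × Fin n) K)) =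
      {f | IsMultiSymm f} :=
  Set.Subset.antisymm (fun _ hf => span_sigmaProd_le hf) fun _ hf =>
    mem_span_sigmaProd_of_card_lt hf fun d _ => Nat.lt_succ_of_le (card_nonzeroColumns_le d)

end MultiSymm

/-- Over an arbitrary commutative ring `K`, the products `σ_{r_1}(w_1)⋯σ_{r_d}(w_d)`,
where `{w_1, …, w_d; r_1, …, r_d}` ranges over multisets of nonempty monomials in
`x(1), …, x(m)` (with distinct `w_i` having multiplicities `r_i`) of total multiplicity
`r_1 + ⋯ + r_d ≤ n`, form a free `K`-module basis of the ring of multisymmetric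
functions `K[V^m]^{S_n}`. -/
theorem sigma_products_free_basis
    (K : Type*) [CommRing K] (m n : ℕ) :
    LinearIndependent K
      (fun M : {M : Multiset (Fin m → ℕ) // M.card ≤ n ∧ ∀ a ∈ M, a ≠ 0} =>
        ∏ a ∈ M.1.toFinset, sigmaMon K m n (M.1.count a) a) ∧
    (Submodule.span K (Set.range
      (fun M : {M : Multiset (Fin m → ℕ) // M.card ≤ n ∧ ∀ a ∈ M, a ≠ 0} =>
        ∏ a ∈ M.1.toFinset, sigmaMon K m n (M.1.count a) a)) :
      Set (MvPolynomial (Fin m × Fin n) K)) = {f | IsMultiSymm f} :=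
  ⟨MultiSymm.linearIndependent_sigmaProd, MultiSymm.span_sigmaProd⟩
end

section
/- Let K be a field with n! invertible and let h_k denote the k-th complete homogeneous symmetric polynomial. Then for each k = 1,...,n, the polynomial h_k(x_k, x_{k+1}, ..., x_n) lies in the Hilbert ideal of K[x_1,...,x_n] generated by the S_n-invariants of positive degree (where S_n permutes x_1,...,x_n). -/
/-!
Write `h_k(S)` for the complete homogeneous symmetric polynomial in a set `S` of variables.
Splitting the monomials of `h_{k+1}(S ∪ {a})` by whether they involve `x_a` gives
`h_{k+1}(S) = h_{k+1}(S ∪ {a}) - x_a h_k(S ∪ {a})`. Adding the missing variables back one at a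
time, induction on the number `m` of missing variables shows that `h_k(S)` lies in the Hilbert
ideal as soon as `k > m`: the base case `m = 0` is `h_k` of all the variables, which is symmetric
and homogeneous of positive degree. The set `{x_k, …, x_n}` misses `k - 1` variables.
-/

open MvPolynomial

/-- `f ∈ K[x_1, …, x_n]` is a symmetric polynomial (invariant under `S_n` permuting the
variables). -/
def IsSymmPoly {K : Type*} [CommRing K] {n : ℕ} (f : MvPolynomial (Fin n) K) : Prop :=
  ∀ σ : Equiv.Perm (Fin n), rename σ f = f

/-- The complete homogeneous symmetric polynomial `h_k(x_k, x_{k+1}, …, x_n)` of the last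
`n − k + 1` variables (with 1-based indexing): the sum of all monomials of degree `k` in
the variables `x_j` with `j ≥ k`. -/
noncomputable def hLast (K : Type*) [CommRing K] (n k : ℕ) : MvPolynomial (Fin n) K :=
  ∑ M ∈ (Finset.univ.filter (fun j : Fin n => k ≤ (j : ℕ) + 1)).sym k,
    ((M : Multiset (Fin n)).map X).prod

namespace Finset

variable {α : Type*} [DecidableEq α]

theorem sym_insert_succ (a : α) (s : Finset α) (k : ℕ) :
    (insert a s).sym (k + 1) = s.sym (k + 1) ∪ ((insert a s).sym k).image (Sym.cons a) := by
  ext M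
  simp only [mem_union, mem_image, mem_sym_iff, mem_insert]
  constructor
  · intro hM
    by_cases haM : a ∈ M
    · obtain ⟨M', rfl⟩ := Sym.exists_cons_of_mem haM
      exact Or.inr ⟨M', fun b hb => hM b (Sym.mem_cons_of_mem hb), rfl⟩
    · exact Or.inl fun b hb => (hM b hb).resolve_left fun hba => haM (hba ▸ hb)
  · rintro (hM | ⟨M', hM', rfl⟩) b hb
    · exact Or.inr (hM b hb)
    · rcases Sym.mem_cons.mp hb with rfl | hb'
      exacts [Or.inl rfl, hM' b hb']

theorem disjoint_sym_image_cons {a : α} {s : Finset α} (ha : a ∉ s) (t : Finset α) (k : ℕ) :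
    Disjoint (s.sym (k + 1)) ((t.sym k).image (Sym.cons a)) := by
  rw [disjoint_right]
  rintro _ hM hM'
  obtain ⟨M', _, rfl⟩ := mem_image.mp hM
  exact ha (mem_sym_iff.mp hM' a (Sym.mem_cons_self a M'))

end Finset

namespace MvPolynomial

open Finset

variable {σ R : Type*} [CommRing R]

variable (σ R) in
noncomputable def hilbertIdeal : Ideal (MvPolynomial σ R) :=
  Ideal.span {f | ∃ d : ℕ, 0 < d ∧ f.IsHomogeneous d ∧ f.IsSymmetric}

variable (R) in
noncomputable def hsymmOn [DecidableEq σ] (s : Finset σ) (k : ℕ) : MvPolynomial σ R :=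
  ∑ M ∈ s.sym k, ((M : Multiset σ).map X).prod

theorem isHomogeneous_multiset_prod_X (M : Multiset σ) :
    ((M.map X).prod : MvPolynomial σ R).IsHomogeneous (Multiset.card M) := by
  induction M using Multiset.induction with
  | empty => simpa using isHomogeneous_one σ R
  | cons a M ih =>
    rw [Multiset.map_cons, Multiset.prod_cons, Multiset.card_cons, add_comm]
    exact (isHomogeneous_X R a).mul ih

variable [DecidableEq σ]

theorem isHomogeneous_hsymm [Fintype σ] (k : ℕ) : (hsymm σ R k).IsHomogeneous k :=
  IsHomogeneous.sum _ _ _ fun M _ => by simpa using isHomogeneous_multiset_prod_X (R := R) M.1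

theorem hsymm_mem_hilbertIdeal [Fintype σ] {k : ℕ} (hk : 0 < k) :
    hsymm σ R k ∈ hilbertIdeal σ R :=
  Ideal.subset_span ⟨k, hk, isHomogeneous_hsymm k, hsymm_isSymmetric σ R k⟩

theorem hsymmOn_univ [Fintype σ] (k : ℕ) : hsymmOn R (univ : Finset σ) k = hsymm σ R k := by
  rw [hsymmOn, sym_univ]
  rfl

theorem hsymmOn_insert {a : σ} {s : Finset σ} (ha : a ∉ s) (k : ℕ) :
    hsymmOn R (insert a s) (k + 1) = hsymmOn R s (k + 1) + X a * hsymmOn R (insert a s) k := by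
  simp only [hsymmOn]
  rw [sym_insert_succ, sum_union (disjoint_sym_image_cons ha _ k),
    sum_image fun M _ M' _ h => (Sym.cons_inj_right a M M').mp h, mul_sum]
  congr 1
  refine sum_congr rfl fun M _ => ?_
  rw [Sym.coe_cons, Multiset.map_cons, Multiset.prod_cons]

theorem hsymmOn_compl_mem_hilbertIdeal [Fintype σ] (t : Finset σ) {k : ℕ} (hk : #t < k) :
    hsymmOn R tᶜ k ∈ hilbertIdeal σ R := by
  induction t using Finset.induction_on generalizing k with
  | empty =>
    rw [compl_empty, hsymmOn_univ]
    exact hsymm_mem_hilbertIdeal hk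
  | insert a t hat ih =>
    rw [card_insert_of_notMem hat] at hk
    obtain ⟨k, rfl⟩ : ∃ k', k = k' + 1 := ⟨k - 1, by omega⟩
    have hinsert : insert a (insert a t)ᶜ = tᶜ := by
      rw [compl_insert, insert_erase (mem_compl.mpr hat)]
    have hrec :
        hsymmOn R (insert a t)ᶜ (k + 1) = hsymmOn R tᶜ (k + 1) - X a * hsymmOn R tᶜ k := by
      rw [← hinsert, hsymmOn_insert (notMem_compl.mpr (mem_insert_self a t))]
      ring
    rw [hrec]
    exact sub_mem (ih (by omega)) (Ideal.mul_mem_left _ _ (ih (by omega)))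

theorem hsymmOn_mem_hilbertIdeal [Fintype σ] {s : Finset σ} {k : ℕ} (hk : #sᶜ < k) :
    hsymmOn R s k ∈ hilbertIdeal σ R :=
  compl_compl s ▸ hsymmOn_compl_mem_hilbertIdeal sᶜ hk

end MvPolynomial

theorem hk_mem_hilbert_ideal_general
    (K : Type*) [Field K] (n : ℕ)
    (k : ℕ) (hk1 : 1 ≤ k) :
    hLast K n k ∈ Ideal.span {f : MvPolynomial (Fin n) K |
      ∃ d : ℕ, 0 < d ∧ f.IsHomogeneous d ∧ IsSymmPoly f} := by
  have hmissing : (Finset.univ.filter fun j : Fin n => k ≤ (j : ℕ) + 1)ᶜ.card < k :=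
    calc (Finset.univ.filter fun j : Fin n => k ≤ (j : ℕ) + 1)ᶜ.card
        ≤ (Finset.univ.filter fun j : Fin n => (j : ℕ) < k - 1).card := by
          rw [Finset.compl_filter]
          refine Finset.card_le_card fun j hj => ?_
          simp only [Finset.mem_filter, Finset.mem_univ, true_and] at hj ⊢
          omega
      _ < k := by rw [Fin.card_filter_val_lt]; omega
  show hsymmOn K _ k ∈ hilbertIdeal (Fin n) K
  exact hsymmOn_mem_hilbertIdeal hmissing

/-- If `n!` is invertible in the field `K`, then for each `k = 1, …, n` the polynomial
`h_k(x_k, …, x_n)` lies in the Hilbert ideal of `K[x_1, …, x_n]`, i.e. the ideal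
generated by the homogeneous `S_n`-invariants of positive degree. -/
theorem hk_mem_hilbert_ideal
    (K : Type*) [Field K] (n : ℕ) (hn : IsUnit (n.factorial : K))
    (k : ℕ) (hk1 : 1 ≤ k) (hkn : k ≤ n) :
    hLast K n k ∈ Ideal.span {f : MvPolynomial (Fin n) K |
      ∃ d : ℕ, 0 < d ∧ f.IsHomogeneous d ∧ IsSymmPoly f} :=
  hk_mem_hilbert_ideal_general K n k hk1
end

section
/- Let K be an arbitrary commutative ring. The multilinear (multidegree (1,...,1)) component of K[V^m]^{S_n} has a free K-basis consisting of the products [w_1]···[w_r] with r ≤ n, where {w_1,...,w_r} ranges over partitions of the variable set {x(1),...,x(m)} into r nonempty blocks, w_i being the product of the variables in block i. -/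
open MvPolynomial

/-- `f` is multilinear: every monomial of `f` has degree exactly `1` in each group of
variables `x(i)_1, …, x(i)_n`. -/
def IsMultilinear {K : Type*} [CommRing K] {m n : ℕ}
    (f : MvPolynomial (Fin m × Fin n) K) : Prop :=
  ∀ d ∈ f.support, ∀ i : Fin m, (∑ j : Fin n, d (i, j)) = 1

/-- For a set `b` of indices, the multilinear polarized power sum
`[∏_{i ∈ b} x(i)] = ∑_{j=1}^n ∏_{i ∈ b} x(i)_j`. -/
noncomputable def sqfreePowerSum (K : Type*) [CommRing K] (m n : ℕ) (b : Finset (Fin m)) :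
    MvPolynomial (Fin m × Fin n) K :=
  ∑ j : Fin n, ∏ i ∈ b, X (i, j)

/-!
A multilinear monomial is `x_g = ∏ i, x(i)_{g i}` for a function `g : Fin m → Fin n`,
and `σ ∈ S_n` sends `x_g` to `x_{σ ∘ g}`. Two functions lie in the same orbit iff they have
the same fibre partition, so the multilinear invariants have the orbit sums `m_Q` as a basis,
`Q` running over the partitions of `Fin m` with at most `n` blocks. Expanding the product gives
`[w₁] ⋯ [w_r] = ∑_{Q ≥ P} m_Q` for the partition `P = {w₁, …, w_r}` (`Q ≥ P` meaning `Q` is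
coarser). This change of basis is unitriangular, hence invertible over any `K`.
-/

open Finset

namespace Finpartition

variable {ι : Type*} [DecidableEq ι] {s : Finset ι}

theorem ext_part {P Q : Finpartition s} (h : ∀ i ∈ s, P.part i = Q.part i) : P = Q := by
  ext b
  constructor <;> intro hb
  · obtain ⟨i, hi, rfl⟩ := P.part_surjOn hb
    exact h i hi ▸ Q.part_mem.2 hi
  · obtain ⟨i, hi, rfl⟩ := Q.part_surjOn hb
    exact (h i hi).symm ▸ P.part_mem.2 hi

theorem prod_parts_prod {M : Type*} [CommMonoid M] (P : Finpartition s) (f : ι → M) :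
    ∏ b ∈ P.parts, ∏ i ∈ b, f i = ∏ i ∈ s, f i := by
  nth_rewrite 2 [← P.biUnion_parts]
  exact (prod_biUnion P.supIndep.pairwiseDisjoint).symm

end Finpartition

section FiberPartition

variable {ι κ : Type*} [Fintype ι] [DecidableEq ι] [DecidableEq κ]

def fiberPartition (g : ι → κ) : Finpartition (univ : Finset ι) :=
  @Finpartition.ofSetoid ι _ _ (Setoid.ker g) fun a b => decEq (g a) (g b)

theorem mem_part_fiberPartition {g : ι → κ} {i j : ι} :
    j ∈ (fiberPartition g).part i ↔ g i = g j :=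
  Finpartition.mem_part_ofSetoid_iff_rel

theorem le_fiberPartition_iff {P : Finpartition (univ : Finset ι)} {g : ι → κ} :
    P ≤ fiberPartition g ↔ ∀ b ∈ P.parts, ∀ i ∈ b, ∀ j ∈ b, g i = g j := by
  constructor
  · intro hle b hb i hi j hj
    obtain ⟨c, hc, hbc⟩ := hle hb
    rw [← mem_part_fiberPartition, (fiberPartition g).part_eq_of_mem hc (hbc hi)]
    exact hbc hj
  · intro hconst b hb
    obtain ⟨i, hi⟩ := P.nonempty_of_mem_parts hb
    exact ⟨_, (fiberPartition g).part_mem.2 (mem_univ i),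
      fun j hj => mem_part_fiberPartition.2 (hconst b hb i hi j hj)⟩

theorem fiberPartition_eq_fiberPartition_iff {g g' : ι → κ} :
    fiberPartition g = fiberPartition g' ↔ ∀ i j, g i = g j ↔ g' i = g' j := by
  constructor
  · intro h i j
    rw [← mem_part_fiberPartition, h, mem_part_fiberPartition]
  · intro h
    refine Finpartition.ext_part fun i _ => ?_
    ext j
    rw [mem_part_fiberPartition, mem_part_fiberPartition, h]

theorem card_parts_fiberPartition_le [Fintype κ] (g : ι → κ) :
    #(fiberPartition g).parts ≤ Fintype.card κ := by
  have hsurj : Set.SurjOn (fun y => ({j | g j = y} : Finset ι)) (univ : Finset κ)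
      ((fiberPartition g).parts : Set (Finset ι)) := by
    intro b hb
    obtain ⟨i, -, rfl⟩ := (fiberPartition g).part_surjOn hb
    refine ⟨g i, mem_univ _, ?_⟩
    ext j
    simp [mem_part_fiberPartition, eq_comm]
  exact (card_le_card_of_surjOn _ hsurj).trans_eq card_univ

theorem exists_fiberPartition_eq [Fintype κ] {Q : Finpartition (univ : Finset ι)}
    (hQ : #Q.parts ≤ Fintype.card κ) : ∃ g : ι → κ, fiberPartition g = Q := by
  obtain ⟨e⟩ : Nonempty (Q.parts ↪ κ) :=
    Function.Embedding.nonempty_of_card_le (by simpa using hQ)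
  refine ⟨fun i => e ⟨Q.part i, Q.part_mem.2 (mem_univ i)⟩,
    Finpartition.ext_part fun i _ => ?_⟩
  ext j
  rw [mem_part_fiberPartition, e.injective.eq_iff, Subtype.mk.injEq, eq_comm,
    Q.mem_part_iff_part_eq_part (mem_univ j) (mem_univ i)]

theorem exists_perm_comp_eq_of_fiberPartition_eq [Finite κ] {g g' : ι → κ}
    (h : fiberPartition g = fiberPartition g') : ∃ σ : Equiv.Perm κ, σ ∘ g = g' := by
  classical
  let e : Set.range g ≃ Set.range g' := (Setoid.quotientKerEquivRange g).symm.trans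
    ((Quotient.congrRight (fiberPartition_eq_fiberPartition_iff.1 h)).trans
      (Setoid.quotientKerEquivRange g'))
  refine ⟨e.extendSubtype, funext fun i => ?_⟩
  have hi : (Setoid.quotientKerEquivRange g).symm ⟨g i, i, rfl⟩ = ⟦i⟧ := by
    rw [Equiv.symm_apply_eq]; rfl
  rw [Function.comp_apply, e.extendSubtype_apply_of_mem _ ⟨i, rfl⟩]
  simp only [e, Equiv.trans_apply, hi]
  rfl

end FiberPartition

section GraphExponent

variable {ι κ : Type*} [Fintype ι]

noncomputable def graphExponent (g : ι → κ) : ι × κ →₀ ℕ :=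
  ∑ i, Finsupp.single (i, g i) 1

theorem graphExponent_apply [DecidableEq κ] (g : ι → κ) (p : ι × κ) :
    graphExponent g p = if g p.1 = p.2 then 1 else 0 := by
  classical
  rw [graphExponent, Finsupp.finsetSum_apply, sum_eq_single p.1]
  · simp [Finsupp.single_apply, Prod.ext_iff]
  · intro i _ hi
    simp [Prod.ext_iff, hi]
  · simp

theorem graphExponent_injective : Function.Injective (graphExponent (ι := ι) (κ := κ)) := by
  classical
  intro g g' h
  funext i
  by_contra hne
  simpa [graphExponent_apply, Ne.symm hne] using DFunLike.congr_fun h (i, g i)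

theorem sum_graphExponent_apply [Fintype κ] (g : ι → κ) (i : ι) :
    ∑ j, graphExponent g (i, j) = 1 := by
  classical
  simp [graphExponent_apply]

theorem exists_graphExponent_eq [Fintype κ] {d : ι × κ →₀ ℕ}
    (hd : ∀ i, ∑ j, d (i, j) = 1) : ∃ g : ι → κ, graphExponent g = d := by
  classical
  have hrow : ∀ i, ∃ j, d (i, j) ≠ 0 := fun i => by
    simpa using exists_ne_zero_of_sum_ne_zero (s := univ) ((hd i).trans_ne one_ne_zero)
  choose g hg using hrow
  refine ⟨g, Finsupp.ext fun ⟨i, j⟩ => ?_⟩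
  have hsplit := add_sum_erase univ (fun j => d (i, j)) (mem_univ (g i))
  rw [hd i] at hsplit
  have hrest : ∀ j ∈ univ.erase (g i), d (i, j) = 0 :=
    sum_eq_zero_iff.1 (by have := hg i; omega)
  rw [graphExponent_apply]
  dsimp only
  split_ifs with hj
  · subst hj
    have := hg i
    omega
  · exact (hrest j (mem_erase.2 ⟨Ne.symm hj, mem_univ j⟩)).symm

theorem mapDomain_graphExponent (σ : Equiv.Perm κ) (g : ι → κ) :
    Finsupp.mapDomain (fun p : ι × κ => (p.1, σ p.2)) (graphExponent g) =
      graphExponent (σ ∘ g) := by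
  simp [graphExponent, Finsupp.mapDomain_finsetSum, Finsupp.mapDomain_single]

theorem prod_X_eq_monomial_graphExponent {R : Type*} [CommSemiring R] (g : ι → κ) :
    ∏ i, (X (i, g i) : MvPolynomial (ι × κ) R) = monomial (graphExponent g) 1 := by
  simp only [graphExponent, monomial_sum_one, X]

end GraphExponent

section Invariants

variable {K : Type*} [CommRing K] {m n : ℕ}

open scoped Classical in
theorem prod_sqfreePowerSum_eq_sum_monomial (P : Finpartition (univ : Finset (Fin m))) :
    ∏ b ∈ P.parts, sqfreePowerSum K m n b =
      ∑ g : Fin m → Fin n with P ≤ fiberPartition g, monomial (graphExponent g) 1 := by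
  have hpart : ∀ i, P.part i ∈ P.parts := fun i => P.part_mem.2 (mem_univ i)
  let rep : P.parts → Fin m := fun b => (P.nonempty_of_mem_parts b.2).choose
  have hrep : ∀ b : P.parts, rep b ∈ b.1 := fun b => (P.nonempty_of_mem_parts b.2).choose_spec
  rw [← prod_coe_sort]
  simp only [sqfreePowerSum]
  rw [Fintype.prod_sum]
  -- a term of the expanded product picks a column `h b` for each block `b`
  refine sum_nbij' (fun h i => h ⟨P.part i, hpart i⟩) (fun g b => g (rep b)) ?_ ?_ ?_ ?_ ?_
  · intro h _
    simp only [mem_filter, mem_univ, true_and, le_fiberPartition_iff]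
    intro b hb i hi j hj
    exact congrArg h (Subtype.ext ((P.part_eq_of_mem hb hi).trans (P.part_eq_of_mem hb hj).symm))
  · exact fun _ _ => mem_univ _
  · intro h _
    funext b
    exact congrArg h (Subtype.ext (P.part_eq_of_mem b.2 (hrep b)))
  · intro g hg
    simp only [mem_filter, mem_univ, true_and, le_fiberPartition_iff] at hg
    funext i
    exact hg _ (hpart i) _ (hrep ⟨_, hpart i⟩) _ (P.mem_part (mem_univ i))
  · intro h _
    rw [← prod_X_eq_monomial_graphExponent, ← P.prod_parts_prod, ← prod_coe_sort P.parts]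
    refine prod_congr rfl fun b _ => prod_congr rfl fun i hi => ?_
    exact congrArg (fun j => X (i, j)) (congrArg h (Subtype.ext (P.part_eq_of_mem b.2 hi).symm))

open scoped Classical in
theorem coeff_graphExponent_prod_sqfreePowerSum (P : Finpartition (univ : Finset (Fin m)))
    (g : Fin m → Fin n) :
    coeff (graphExponent g) (∏ b ∈ P.parts, sqfreePowerSum K m n b) =
      if P ≤ fiberPartition g then 1 else 0 := by
  simp_rw [prod_sqfreePowerSum_eq_sum_monomial, coeff_sum, coeff_monomial,
    graphExponent_injective.eq_iff, sum_ite_eq', mem_filter, mem_univ, true_and]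

theorem isMultiSymm_prod_sqfreePowerSum (P : Finpartition (univ : Finset (Fin m))) :
    IsMultiSymm (∏ b ∈ P.parts, sqfreePowerSum K m n b) := by
  intro σ
  simp only [sqfreePowerSum, map_prod, map_sum, rename_X]
  exact prod_congr rfl fun b _ =>
    Equiv.sum_comp σ (fun j => (∏ i ∈ b, X (i, j) : MvPolynomial (Fin m × Fin n) K))

theorem isMultilinear_prod_sqfreePowerSum (P : Finpartition (univ : Finset (Fin m))) :
    IsMultilinear (∏ b ∈ P.parts, sqfreePowerSum K m n b) := by
  classical
  intro d hd i
  rw [prod_sqfreePowerSum_eq_sum_monomial] at hd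
  obtain ⟨g, -, hg⟩ := mem_biUnion.1 (support_sum hd)
  rw [mem_singleton.1 (support_monomial_subset hg)]
  exact sum_graphExponent_apply g i

open scoped Classical in
noncomputable def orbitSum (K : Type*) [CommRing K] (n : ℕ)
    (Q : Finpartition (univ : Finset (Fin m))) : MvPolynomial (Fin m × Fin n) K :=
  ∑ g : Fin m → Fin n with fiberPartition g = Q, monomial (graphExponent g) 1

open scoped Classical in
theorem prod_sqfreePowerSum_eq_sum_orbitSum (P : Finpartition (univ : Finset (Fin m))) :
    ∏ b ∈ P.parts, sqfreePowerSum K m n b = ∑ Q with P ≤ Q, orbitSum K n Q := by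
  rw [prod_sqfreePowerSum_eq_sum_monomial,
    ← sum_fiberwise_of_maps_to (g := fiberPartition) (t := {Q | P ≤ Q}) (by simp)]
  refine sum_congr rfl fun Q hQ => ?_
  rw [orbitSum, filter_filter]
  refine sum_congr (filter_congr fun g _ => ?_) fun _ _ => rfl
  simp only [mem_filter, mem_univ, true_and] at hQ
  exact ⟨And.right, fun h => ⟨h ▸ hQ, h⟩⟩

theorem orbitSum_mem_span (Q : Finpartition (univ : Finset (Fin m))) (hQ : #Q.parts ≤ n) :
    orbitSum K n Q ∈ Submodule.span K (Set.range
      fun P : {P : Finpartition (univ : Finset (Fin m)) // #P.parts ≤ n} =>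
        ∏ b ∈ P.1.parts, sqfreePowerSum K m n b) := by
  classical
  induction Q using WellFoundedGT.induction with
  | _ Q ih =>
    have hsplit := prod_sqfreePowerSum_eq_sum_orbitSum (K := K) (n := n) Q
    rw [← insert_erase (mem_filter.2 ⟨mem_univ Q, le_rfl⟩), sum_insert (notMem_erase _ _)]
      at hsplit
    rw [eq_sub_of_add_eq hsplit.symm]
    refine Submodule.sub_mem _ (Submodule.subset_span ⟨⟨Q, hQ⟩, rfl⟩) (Submodule.sum_mem _ ?_)
    intro Q' hQ'
    simp only [mem_erase, mem_filter, mem_univ, true_and] at hQ'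
    have hlt : Q < Q' := lt_of_le_of_ne hQ'.2 (Ne.symm hQ'.1)
    exact ih Q' hlt ((Finpartition.card_mono hlt.le).trans hQ)

variable (K m n) in
def multilinearInvariants : Submodule K (MvPolynomial (Fin m × Fin n) K) where
  carrier := {f | IsMultiSymm f ∧ IsMultilinear f}
  zero_mem' := ⟨fun _ => map_zero _, fun d hd => by simp at hd⟩
  add_mem' := by
    classical
    exact fun hf hg => ⟨fun σ => by rw [map_add, hf.1 σ, hg.1 σ], fun d hd i =>
      (mem_union.1 (support_add hd)).elim (hf.2 d · i) (hg.2 d · i)⟩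
  smul_mem' := fun a _ hf =>
    ⟨fun σ => by rw [map_smul, hf.1 σ], fun d hd => hf.2 d (support_smul hd)⟩

theorem coeff_graphExponent_eq_of_fiberPartition_eq {f : MvPolynomial (Fin m × Fin n) K}
    (hf : IsMultiSymm f) {g g' : Fin m → Fin n} (h : fiberPartition g = fiberPartition g') :
    coeff (graphExponent g) f = coeff (graphExponent g') f := by
  obtain ⟨σ, hσ⟩ := exists_perm_comp_eq_of_fiberPartition_eq h
  have hinj : Function.Injective fun p : Fin m × Fin n => (p.1, σ p.2) :=
    Function.injective_id.prodMap σ.injective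
  rw [← coeff_rename_mapDomain _ hinj f, hf σ, mapDomain_graphExponent, hσ]

theorem eq_sum_monomial_graphExponent {f : MvPolynomial (Fin m × Fin n) K}
    (hf : IsMultilinear f) :
    f = ∑ g : Fin m → Fin n, monomial (graphExponent g) (coeff (graphExponent g) f) := by
  classical
  have hsupp : f.support ⊆ univ.image graphExponent := fun d hd => by
    obtain ⟨g, rfl⟩ := exists_graphExponent_eq (hf d hd)
    exact mem_image_of_mem _ (mem_univ g)
  conv_lhs => rw [as_sum f]
  rw [sum_subset hsupp fun d _ hd => by rw [notMem_support_iff.1 hd, monomial_zero],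
    sum_image graphExponent_injective.injOn]

theorem span_prod_sqfreePowerSum_le :
    Submodule.span K (Set.range
      fun P : {P : Finpartition (univ : Finset (Fin m)) // #P.parts ≤ n} =>
        ∏ b ∈ P.1.parts, sqfreePowerSum K m n b) ≤ multilinearInvariants K m n :=
  Submodule.span_le.2 <| Set.range_subset_iff.2 fun P =>
    ⟨isMultiSymm_prod_sqfreePowerSum P.1, isMultilinear_prod_sqfreePowerSum P.1⟩

theorem multilinearInvariants_le_span :
    multilinearInvariants K m n ≤ Submodule.span K (Set.range
      fun P : {P : Finpartition (univ : Finset (Fin m)) // #P.parts ≤ n} =>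
        ∏ b ∈ P.1.parts, sqfreePowerSum K m n b) := by
  classical
  rintro f ⟨hsymm, hlin⟩
  rw [eq_sum_monomial_graphExponent hlin, ← sum_fiberwise_of_maps_to (g := fiberPartition)
    (t := {Q | #Q.parts ≤ n}) fun g _ => by simpa using card_parts_fiberPartition_le g]
  refine Submodule.sum_mem _ fun Q hQ => ?_
  simp only [mem_filter, mem_univ, true_and] at hQ
  obtain ⟨gQ, rfl⟩ := exists_fiberPartition_eq (κ := Fin n) (by simpa using hQ)
  have horbit : ∑ g with fiberPartition g = fiberPartition gQ,
      monomial (graphExponent g) (coeff (graphExponent g) f) =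
        coeff (graphExponent gQ) f • orbitSum K n (fiberPartition gQ) := by
    rw [orbitSum, smul_sum]
    refine sum_congr rfl fun g hg => ?_
    rw [smul_monomial, smul_eq_mul, mul_one,
      coeff_graphExponent_eq_of_fiberPartition_eq hsymm (mem_filter.1 hg).2]
  rw [horbit]
  exact Submodule.smul_mem _ _ (orbitSum_mem_span _ hQ)

theorem linearIndependent_prod_sqfreePowerSum :
    LinearIndependent K fun P : {P : Finpartition (univ : Finset (Fin m)) // #P.parts ≤ n} =>
      ∏ b ∈ P.1.parts, sqfreePowerSum K m n b := by
  classical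
  rw [Fintype.linearIndependent_iff]
  intro c hc
  suffices ∀ Q hQ, c ⟨Q, hQ⟩ = 0 from fun P => this P.1 P.2
  intro Q
  induction Q using WellFoundedLT.induction with
  | _ Q ih =>
    intro hQ
    obtain ⟨gQ, hgQ⟩ := exists_fiberPartition_eq (κ := Fin n) (by simpa using hQ)
    have hcoeff : ∑ P with P.1 ≤ Q, c P = 0 := by
      simpa only [coeff_sum, coeff_smul, coeff_graphExponent_prod_sqfreePowerSum, hgQ,
        smul_eq_mul, mul_ite, mul_one, mul_zero, coeff_zero, sum_ite, sum_const_zero, add_zero]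
        using congrArg (coeff (graphExponent gQ)) hc
    rwa [sum_eq_single_of_mem ⟨Q, hQ⟩ (by simp) fun P hP hne =>
      ih P.1 (lt_of_le_of_ne (mem_filter.1 hP).2 fun h => hne (Subtype.ext h)) P.2] at hcoeff

end Invariants

/-- Over an arbitrary commutative ring `K`, the multilinear component of `K[V^m]^{S_n}`
has a free `K`-basis consisting of the products `[w₁]⋯[w_r]` with `r ≤ n`, where
`{w₁, …, w_r}` ranges over the partitions of the variable set `{x(1), …, x(m)}` into `r`
nonempty blocks and `w_i` is the product of the variables in the `i`-th block. -/
theorem multilinear_multisymm_basis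
    (K : Type*) [CommRing K] (m n : ℕ) :
    LinearIndependent K
      (fun P : {P : Finpartition (Finset.univ : Finset (Fin m)) // P.parts.card ≤ n} =>
        ∏ b ∈ P.1.parts, sqfreePowerSum K m n b) ∧
    (Submodule.span K (Set.range
      (fun P : {P : Finpartition (Finset.univ : Finset (Fin m)) // P.parts.card ≤ n} =>
        ∏ b ∈ P.1.parts, sqfreePowerSum K m n b)) :
      Set (MvPolynomial (Fin m × Fin n) K)) =
      {f | IsMultiSymm f ∧ IsMultilinear f} :=
  ⟨linearIndependent_prod_sqfreePowerSum,
    congrArg SetLike.coe (span_prod_sqfreePowerSum_le.antisymm multilinearInvariants_le_span)⟩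
end

section
/- Let K be a field of characteristic p > 0 with p ≤ n. Then the multisymmetric polynomial [x(1)···x(m)] = Σ_{j=1}^n x(1)_j···x(m)_j is indecomposable in K[V^m]^{S_n}, i.e. it cannot be written as a polynomial in S_n-invariants of strictly lower degree, for m ≥ 2. -/
/-!
Let a finite group `A` whose order vanishes in `K` (here `Fin p`) index some columns via
`ι : A ↪ Fin n`, and fix a row `i₀`. The functional `traceFunctional` sums, over
`j : Fin m → A` with `j i₀ = 0`, the coefficient of `∏ i, x(i)_{ι (j i)}`; it is `1` on
`[x(1)⋯x(m)]`, since only `j = 0` puts all rows into one column. On a product `f g` of invariants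
without constant term, that coefficient splits as `∑ S, f_S g_{Sᶜ}` over sets `S` of rows. One of
`S`, `Sᶜ` avoids `i₀`: if it is empty, its factor contributes the constant term `0`; otherwise
translating `j` on it by `k ∈ A` permutes the columns of that factor and does not touch the other
one, so the sum over `j` is `|A|` times a sum over one fiber, hence `0`.
-/

open MvPolynomial

open Finset

theorem sum_eq_card_nsmul_sum_fiber_zero {X A M : Type*} [Fintype X] [AddGroup A] [Fintype A]
    [DecidableEq A] [AddCommMonoid M] (c : X → A) (φ : A → Equiv.Perm X)
    (hc : ∀ k x, c (φ k x) = c x + k) (F : X → M) (hF : ∀ k x, F (φ k x) = F x) :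
    ∑ x, F x = Fintype.card A • ∑ x with c x = 0, F x := by
  rw [← sum_fiberwise univ c F, ← card_univ, ← sum_const]
  refine sum_congr rfl fun k _ => (sum_equiv (φ k) (fun x => ?_) fun x _ => (hF k x).symm).symm
  simp [hc]

noncomputable def multilinearExponent {ι σ : Type*} (S : Finset ι) (κ : ι → σ) : ι × σ →₀ ℕ :=
  ∑ i ∈ S, Finsupp.single (i, κ i) 1

section multilinearExponent

variable {ι σ : Type*}

theorem multilinearExponent_apply [DecidableEq ι] [DecidableEq σ] (S : Finset ι) (κ : ι → σ)
    (q : ι × σ) : multilinearExponent S κ q = if q.1 ∈ S ∧ κ q.1 = q.2 then 1 else 0 := by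
  simp only [multilinearExponent, Finsupp.finsetSum_apply, Finsupp.single_apply, Prod.ext_iff,
    ite_and, sum_ite_eq']

@[simp]
theorem multilinearExponent_empty (κ : ι → σ) : multilinearExponent ∅ κ = 0 :=
  sum_empty

theorem multilinearExponent_add_compl [Fintype ι] [DecidableEq ι] (S : Finset ι) (κ : ι → σ) :
    multilinearExponent S κ + multilinearExponent Sᶜ κ = multilinearExponent univ κ :=
  sum_add_sum_compl S _

theorem multilinearExponent_congr {S : Finset ι} {κ κ' : ι → σ} (h : Set.EqOn κ κ' S) :
    multilinearExponent S κ = multilinearExponent S κ' :=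
  sum_congr rfl fun i hi => by rw [h hi]

theorem mapDomain_multilinearExponent {τ : Type*} (g : σ → τ) (S : Finset ι) (κ : ι → σ) :
    Finsupp.mapDomain (fun q : ι × σ => (q.1, g q.2)) (multilinearExponent S κ) =
      multilinearExponent S (g ∘ κ) := by
  simp only [multilinearExponent, Finsupp.mapDomain_finsetSum, Finsupp.mapDomain_single,
    Function.comp_apply]

theorem multilinearExponent_univ_injective [Fintype ι] :
    Function.Injective (multilinearExponent univ : (ι → σ) → ι × σ →₀ ℕ) := by
  classical
  intro κ κ' h
  funext i
  simpa [multilinearExponent_apply, eq_comm] using DFunLike.congr_fun h (i, κ i)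

theorem eq_multilinearExponent_of_le [Fintype ι] [DecidableEq ι] [DecidableEq σ]
    {κ : ι → σ} {a : ι × σ →₀ ℕ} (h : a ≤ multilinearExponent univ κ) :
    a = multilinearExponent {i | a (i, κ i) ≠ 0} κ := by
  ext ⟨i, c⟩
  have hle := h (i, c)
  by_cases hc : κ i = c
  · subst hc
    simp only [multilinearExponent_apply, mem_filter, mem_univ, true_and, and_true,
      if_true] at hle ⊢
    split_ifs <;> omega
  · simp_all [multilinearExponent_apply]

theorem prod_X_eq_monomial_multilinearExponent {R : Type*} [CommSemiring R] (S : Finset ι)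
    (κ : ι → σ) : ∏ i ∈ S, (X (i, κ i) : MvPolynomial (ι × σ) R) =
      monomial (multilinearExponent S κ) 1 := by
  simp only [multilinearExponent, monomial_sum_one, X]

theorem coeff_mul_multilinearExponent {R : Type*} [CommSemiring R] [Fintype ι] [DecidableEq ι]
    (f g : MvPolynomial (ι × σ) R) (κ : ι → σ) :
    (f * g).coeff (multilinearExponent univ κ) =
      ∑ S : Finset ι,
        f.coeff (multilinearExponent S κ) * g.coeff (multilinearExponent Sᶜ κ) := by
  classical
  rw [coeff_mul]
  refine (sum_nbij' (fun S => (multilinearExponent S κ, multilinearExponent Sᶜ κ))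
    (fun b => ({i | b.1 (i, κ i) ≠ 0} : Finset ι)) (fun S _ => ?_) (fun _ _ => mem_univ _)
    (fun S _ => ?_) (fun b hb => ?_) fun _ _ => rfl).symm
  · exact HasAntidiagonal.mem_antidiagonal.2 (multilinearExponent_add_compl S κ)
  · ext i
    simp [multilinearExponent_apply]
  · rw [HasAntidiagonal.mem_antidiagonal] at hb
    have h₁ := (eq_multilinearExponent_of_le (hb ▸ le_self_add : b.1 ≤ _)).symm
    refine Prod.ext h₁ (add_left_cancel (a := b.1) ?_)
    rw [hb, ← multilinearExponent_add_compl _ κ, h₁]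

end multilinearExponent

theorem IsMultiSymm.coeff_multilinearExponent_comp {K : Type*} [CommRing K] {m n : ℕ}
    {f : MvPolynomial (Fin m × Fin n) K} (hf : IsMultiSymm f) (τ : Equiv.Perm (Fin n))
    (S : Finset (Fin m)) (κ : Fin m → Fin n) :
    f.coeff (multilinearExponent S (τ ∘ κ)) = f.coeff (multilinearExponent S κ) := by
  conv_lhs => rw [← mapDomain_multilinearExponent, ← hf τ]
  exact coeff_rename_mapDomain _ (fun q q' h => by simpa [Prod.ext_iff] using h) f _

section traceFunctional

variable (K : Type*) [CommRing K] {m n : ℕ} {A : Type*} [AddGroup A] [Fintype A]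
  [DecidableEq A] (ι : A ↪ Fin n) (i₀ : Fin m)

noncomputable def traceFunctional : MvPolynomial (Fin m × Fin n) K →ₗ[K] K :=
  ∑ j : Fin m → A with j i₀ = 0, lcoeff K (multilinearExponent univ (ι ∘ j))

theorem traceFunctional_apply (h : MvPolynomial (Fin m × Fin n) K) :
    traceFunctional K ι i₀ h = ∑ j : Fin m → A with j i₀ = 0,
      h.coeff (multilinearExponent univ (ι ∘ j)) := by
  simp [traceFunctional]

theorem traceFunctional_traceMonomial :
    traceFunctional K ι i₀ (∑ c : Fin n, ∏ i : Fin m, X (i, c)) = 1 := by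
  classical
  have hX : ∀ c : Fin n, ∏ i : Fin m, (X (i, c) : MvPolynomial (Fin m × Fin n) K) =
      monomial (multilinearExponent univ fun _ => c) 1 :=
    fun c => prod_X_eq_monomial_multilinearExponent univ _
  have hconst : ∀ j : Fin m → A, j i₀ = 0 → ∀ c : Fin n,
      (fun _ => c) = ι ∘ j ↔ c = ι 0 ∧ j = 0 := by
    intro j hj c
    constructor
    · intro h
      have hc : c = ι 0 := by simpa [hj] using congrFun h i₀
      refine ⟨hc, funext fun i => ι.injective ?_⟩
      simpa [hc] using (congrFun h i).symm
    · rintro ⟨rfl, rfl⟩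
      rfl
  have hcoeff : ∀ j : Fin m → A, j i₀ = 0 →
      (∑ c : Fin n, ∏ i : Fin m, (X (i, c) : MvPolynomial (Fin m × Fin n) K)).coeff
        (multilinearExponent univ (ι ∘ j)) = if j = 0 then 1 else 0 := by
    intro j hj
    simp only [coeff_sum, hX, coeff_monomial, multilinearExponent_univ_injective.eq_iff,
      hconst j hj, ite_and, sum_ite_eq', mem_univ, if_true]
  rw [traceFunctional_apply, sum_congr rfl fun j hj => hcoeff j (mem_filter.1 hj).2,
    sum_ite_eq']
  simp

variable {K}

theorem sum_coeff_mul_coeff_multilinearExponent_eq_zero (hA : (Fintype.card A : K) = 0)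
    {f : MvPolynomial (Fin m × Fin n) K} (hf : IsMultiSymm f) (hf0 : constantCoeff f = 0)
    (g : MvPolynomial (Fin m × Fin n) K) {S : Finset (Fin m)} (hi₀ : i₀ ∉ S) :
    ∑ j : Fin m → A with j i₀ = 0, f.coeff (multilinearExponent S (ι ∘ j)) *
      g.coeff (multilinearExponent Sᶜ (ι ∘ j)) = 0 := by
  rcases S.eq_empty_or_nonempty with rfl | ⟨i₁, hi₁⟩
  · simp [← constantCoeff_eq, hf0]
  let shift : A → Equiv.Perm (Fin m → A) :=
    fun k => Equiv.addRight fun i => if i ∈ S then k else 0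
  let τ : A → Equiv.Perm (Fin n) := fun k => (Equiv.addRight k).viaFintypeEmbedding ι
  have hS : ∀ k j,
      multilinearExponent S (ι ∘ shift k j) = multilinearExponent S (τ k ∘ ι ∘ j) :=
    fun k j => multilinearExponent_congr fun i hi => by simp [shift, τ, mem_coe.1 hi]
  have hSc : ∀ k j,
      multilinearExponent Sᶜ (ι ∘ shift k j) = multilinearExponent Sᶜ (ι ∘ j) :=
    fun k j => multilinearExponent_congr fun i hi => by simp_all [shift]
  rw [sum_filter, sum_eq_card_nsmul_sum_fiber_zero (fun j => j i₁) shift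
    (fun k j => by simp [shift, hi₁]) _ (fun k j => ?_), nsmul_eq_mul, hA, zero_mul]
  simp only [hS, hSc, hf.coeff_multilinearExponent_comp]
  simp [shift, hi₀]

theorem traceFunctional_mul_eq_zero (hA : (Fintype.card A : K) = 0)
    {f g : MvPolynomial (Fin m × Fin n) K} (hf : IsMultiSymm f) (hg : IsMultiSymm g)
    (hf0 : constantCoeff f = 0) (hg0 : constantCoeff g = 0) :
    traceFunctional K ι i₀ (f * g) = 0 := by
  classical
  simp only [traceFunctional_apply, coeff_mul_multilinearExponent]
  rw [sum_comm]
  refine sum_eq_zero fun S _ => ?_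
  by_cases hS : i₀ ∈ S
  · have := sum_coeff_mul_coeff_multilinearExponent_eq_zero ι i₀ hA hg hg0 f (S := Sᶜ) (by simpa)
    simpa only [compl_compl, mul_comm] using this
  · exact sum_coeff_mul_coeff_multilinearExponent_eq_zero ι i₀ hA hf hf0 g hS

theorem span_le_ker_traceFunctional (hA : (Fintype.card A : K) = 0) :
    Submodule.span K {h : MvPolynomial (Fin m × Fin n) K |
      ∃ f g, IsMultiSymm f ∧ IsMultiSymm g ∧
        constantCoeff f = 0 ∧ constantCoeff g = 0 ∧ h = f * g} ≤
      LinearMap.ker (traceFunctional K ι i₀) :=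
  Submodule.span_le.2 fun _ ⟨_, _, hf, hg, hf0, hg0, e⟩ =>
    e ▸ traceFunctional_mul_eq_zero ι i₀ hA hf hg hf0 hg0

end traceFunctional

/-- Let `K` be a field of characteristic `p` with `0 < p ≤ n` and `m ≥ 2`. Then the
multisymmetric polynomial `[x(1)⋯x(m)] = ∑_{j=1}^n x(1)_j ⋯ x(m)_j` is indecomposable in
`K[V^m]^{S_n}`: it does not lie in the square of the ideal of `K[V^m]^{S_n}` spanned by
the homogeneous invariants of positive degree (equivalently, it cannot be written as a
polynomial in invariants of strictly lower degree). -/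
theorem traceMonomial_indecomposable
    (K : Type*) [Field K] (m n p : ℕ) [CharP K p] (hp : 0 < p) (hpn : p ≤ n)
    (hm : 2 ≤ m) :
    (∑ j : Fin n, ∏ i : Fin m, X (i, j) : MvPolynomial (Fin m × Fin n) K) ∉
      Submodule.span K {h : MvPolynomial (Fin m × Fin n) K |
        ∃ f g, IsMultiSymm f ∧ IsMultiSymm g ∧
          constantCoeff f = 0 ∧ constantCoeff g = 0 ∧ h = f * g} := by
  have : NeZero p := ⟨hp.ne'⟩
  have hA : (Fintype.card (Fin p) : K) = 0 := by rw [Fintype.card_fin, CharP.cast_eq_zero]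
  intro hmem
  have h0 := span_le_ker_traceFunctional (Fin.castLEEmb hpn) (⟨0, by omega⟩ : Fin m) hA hmem
  rw [LinearMap.mem_ker, traceFunctional_traceMonomial] at h0
  exact one_ne_zero h0
end

section
/- Let K be a field with char K ≠ 2 and n = 2. For variables x, y, z with [u] denoting the trace of the corresponding product of two generic 2×2 diagonal matrices, the identity [xyz] = ½([xy][z] + [xz][y] + [yz][x] − [x][y][z]) holds in K[V^3]^{S_2}. -/
open MvPolynomial

/-- The trace `[w] = ∑_{j=1}^{2} ∏_i x(i)_j^{a i}` of a monomial `w` in three generic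
diagonal `2 × 2` matrices `x = x(0)`, `y = x(1)`, `z = x(2)`. -/
noncomputable def tr2 (K : Type*) [Field K] (a : Fin 3 → ℕ) :
    MvPolynomial (Fin 3 × Fin 2) K :=
  ∑ j : Fin 2, ∏ i : Fin 3, X (i, j) ^ a i

/-- For `char K ≠ 2` and `n = 2`, the fundamental multilinear trace identity for diagonal
`2 × 2` matrices: `[xyz] = ½([xy][z] + [xz][y] + [yz][x] − [x][y][z])`. -/
theorem fundamental_identity_n_two
    (K : Type*) [Field K] (h2 : (2 : K) ≠ 0) :
    tr2 K ![1, 1, 1] =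
      (2 : K)⁻¹ • (tr2 K ![1, 1, 0] * tr2 K ![0, 0, 1]
        + tr2 K ![1, 0, 1] * tr2 K ![0, 1, 0]
        + tr2 K ![0, 1, 1] * tr2 K ![1, 0, 0]
        - tr2 K ![1, 0, 0] * tr2 K ![0, 1, 0] * tr2 K ![0, 0, 1]) := by
  have hC : (2 : MvPolynomial (Fin 3 × Fin 2) K) = C (2 : K) := by
    rw [show ((2:K)) = ((2:ℕ):K) by norm_num, C_eq_coe_nat]; norm_num
  have h2' : (2 : MvPolynomial (Fin 3 × Fin 2) K) ≠ 0 := by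
    rw [hC, Ne, C_eq_zero]; exact h2
  rw [smul_eq_C_mul, ← mul_right_inj' h2', ← mul_assoc, hC, ← C_mul,
    mul_inv_cancel₀ h2, C_1, one_mul]
  simp only [tr2, Fin.sum_univ_two, Fin.prod_univ_three, Matrix.cons_val_zero,
    Matrix.cons_val_one, Matrix.head_cons, Matrix.cons_val_two, Matrix.tail_cons,
    pow_zero, pow_one, one_mul]
  ring_nf
  rw [← hC]
  ring
end

section
/- Let K be a field with char K ≠ 2. The bigraded Hilbert series of K[V^m]^{S_2} (V = K², S_2 swapping coordinates, diagonal action on m copies) equals (Σ_{i=0}^{⌊m/2⌋} e_{2i}(t_1,...,t_m)) / Π_{j=1}^m (1−t_j)(1−t_j²), where e_i is the i-th elementary symmetric polynomial. -/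
open MvPolynomial

/-- `f` is invariant under `S_2` swapping the two coordinates (simultaneously in all `m`
pairs of variables). -/
def IsMultiSymm2 {K : Type*} [Field K] {m : ℕ} (f : MvPolynomial (Fin m × Fin 2) K) :
    Prop :=
  ∀ σ : Equiv.Perm (Fin 2), rename (fun p : Fin m × Fin 2 => (p.1, σ p.2)) f = f

/-- The multigraded Hilbert series of `K[V^m]^{S_2}` (`V = K²`): the coefficient at the
multidegree `α` is the `K`-dimension of the space of invariants of multidegree `α`. -/
noncomputable def hilbertSeriesS2 (K : Type*) [Field K] (m : ℕ) :
    MvPowerSeries (Fin m) ℤ :=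
  fun α : Fin m →₀ ℕ =>
    (Module.finrank K (Submodule.span K {f : MvPolynomial (Fin m × Fin 2) K |
      IsMultiSymm2 f ∧ ∀ d ∈ f.support, ∀ i : Fin m, (∑ j : Fin 2, d (i, j)) = α i}) : ℤ)

/-!
The swap permutes the monomials, so the invariants of multidegree `α` have as a basis the
orbit sums of the monomials of multidegree `α`, one for each orbit. Counting orbits as in
Burnside's lemma, twice the dimension is `∏ (αᵢ + 1) + [all αᵢ even]`: the monomials of multidegree `α` plus those
fixed by the swap. As power series these are `∏ 1/(1 - tⱼ)²` and `∏ 1/(1 - tⱼ²)`, so twice the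
numerator is `∏ (1 + tⱼ) + ∏ (1 - tⱼ) = 2 ∑ e₂ᵢ`.
-/

open Finset

namespace Finset

variable {ι M R : Type*} [AddCommMonoid M] [CommRing R]

theorem sum_powersetCard_two_mul_eq_sum_filter_even (s : Finset ι) (f : Finset ι → M) :
    ∑ i ∈ range (#s / 2 + 1), ∑ t ∈ powersetCard (2 * i) s, f t =
      ∑ t ∈ s.powerset with Even #t, f t := by
  rw [← sum_fiberwise_of_maps_to (g := fun t => #t / 2) (t := range (#s / 2 + 1))]
  · refine sum_congr rfl fun i _ => sum_congr ?_ fun _ _ => rfl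
    ext t
    simp only [mem_powersetCard, mem_filter, mem_powerset, Nat.even_iff]
    rw [and_assoc]
    exact and_congr_right fun _ => by omega
  · intro t ht
    simp only [mem_filter, mem_powerset] at ht
    have := card_le_card ht.1
    simp only [mem_range]
    omega

theorem prod_one_add_add_prod_one_sub (s : Finset ι) (f : ι → R) :
    ∏ i ∈ s, (1 + f i) + ∏ i ∈ s, (1 - f i) =
      2 * ∑ i ∈ range (#s / 2 + 1), ∑ t ∈ powersetCard (2 * i) s, ∏ j ∈ t, f j := by
  simp_rw [sub_eq_add_neg, prod_one_add, prod_neg, ← sum_add_distrib,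
    sum_powersetCard_two_mul_eq_sum_filter_even, sum_filter, mul_sum]
  refine sum_congr rfl fun t _ => ?_
  rcases Nat.even_or_odd #t with h | h
  · rw [h.neg_one_pow, if_pos h]; ring
  · rw [h.neg_one_pow, if_neg (Nat.not_even_iff_odd.2 h)]; ring

end Finset

namespace MvPowerSeries

variable {σ R : Type*} [CommRing R]

/-- The product `∏ᵢ (∑ₐ c i a • tᵢ ^ a)` of univariate series in distinct variables. -/
def ofProdCoeff [Fintype σ] (c : σ → ℕ → R) : MvPowerSeries σ R :=
  fun α => ∏ i, c i (α i)

/-- The coefficient sequence of `(1 - t ^ n) * ∑ₐ c a • t ^ a`. -/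
def diffSeq (n : ℕ) (c : ℕ → R) (a : ℕ) : R :=
  c a - if n ≤ a then c (a - n) else 0

theorem diffSeq_one_cast_add_one : diffSeq 1 (fun a => (a : R) + 1) = fun _ => 1 := by
  funext a
  rcases a with _ | a <;> simp [diffSeq]

theorem diffSeq_one_one : diffSeq 1 (fun _ => (1 : R)) = fun a => if a = 0 then 1 else 0 := by
  funext a
  rcases a with _ | a <;> simp [diffSeq]

theorem diffSeq_two_even :
    diffSeq 2 (fun a => if Even a then (1 : R) else 0) = fun a => if a = 0 then 1 else 0 := by
  funext a
  rcases a with _ | _ | a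
  · simp [diffSeq]
  · simp [diffSeq]
  · simp [diffSeq, Nat.even_add_one]

theorem coeff_mul_one_sub_X_pow (F : MvPowerSeries σ R) (k : σ) (n : ℕ) (α : σ →₀ ℕ) :
    coeff α (F * (1 - X k ^ n)) =
      coeff α F - if n ≤ α k then coeff (α - Finsupp.single k n) F else 0 := by
  rw [mul_sub, mul_one, map_sub, X_pow_eq, coeff_mul_monomial, mul_one]
  simp only [Finsupp.single_le_iff]

variable [Fintype σ]

@[simp]
theorem coeff_ofProdCoeff (c : σ → ℕ → R) (α : σ →₀ ℕ) :
    coeff α (ofProdCoeff c) = ∏ i, c i (α i) := rfl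

theorem ofProdCoeff_ite_eq_zero :
    ofProdCoeff (fun (_ : σ) a => if a = 0 then (1 : R) else 0) = 1 := by
  classical
  ext α
  rw [coeff_ofProdCoeff, prod_boole, coeff_one]
  simp [Finsupp.ext_iff]

variable [DecidableEq σ]

theorem ofProdCoeff_mul_one_sub_X_pow (c : σ → ℕ → R) (k : σ) (n : ℕ) :
    ofProdCoeff c * (1 - X k ^ n) =
      ofProdCoeff (Function.update c k (diffSeq n (c k))) := by
  ext α
  simp only [coeff_mul_one_sub_X_pow, coeff_ofProdCoeff]
  rw [Fintype.prod_eq_mul_prod_compl k, Fintype.prod_eq_mul_prod_compl k,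
    Fintype.prod_eq_mul_prod_compl k, Function.update_self]
  have h_sub : ∏ i ∈ {k}ᶜ, c i ((α - Finsupp.single k n) i) = ∏ i ∈ {k}ᶜ, c i (α i) :=
    prod_congr rfl fun i hi => by
      rw [Finsupp.tsub_apply, Finsupp.single_eq_of_ne (by simpa using hi), Nat.sub_zero]
  have h_update : ∏ i ∈ {k}ᶜ, Function.update c k (diffSeq n (c k)) i (α i) =
      ∏ i ∈ {k}ᶜ, c i (α i) :=
    prod_congr rfl fun i hi => by rw [Function.update_of_ne (by simpa using hi)]
  rw [h_sub, h_update, Finsupp.tsub_apply, Finsupp.single_eq_same, diffSeq]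
  split_ifs <;> ring

theorem ofProdCoeff_mul_prod_one_sub_X_pow (c : σ → ℕ → R) (n : ℕ) (s : Finset σ) :
    ofProdCoeff c * ∏ j ∈ s, (1 - X j ^ n) =
      ofProdCoeff fun i => if i ∈ s then diffSeq n (c i) else c i := by
  induction s using Finset.induction_on with
  | empty => simp
  | insert k s hk ih =>
    rw [prod_insert hk, mul_comm (1 - X k ^ n), ← mul_assoc, ih, ofProdCoeff_mul_one_sub_X_pow,
      if_neg hk]
    congr 1
    funext i
    by_cases hi : i = k
    · subst hi; simp
    · simp [hi]

theorem ofProdCoeff_mul_prod_univ_one_sub_X_pow (c : σ → ℕ → R) (n : ℕ) :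
    ofProdCoeff c * ∏ j, (1 - X j ^ n) = ofProdCoeff fun i => diffSeq n (c i) := by
  simp [ofProdCoeff_mul_prod_one_sub_X_pow]

theorem ofProdCoeff_cast_add_one_mul_prod :
    ofProdCoeff (fun (_ : σ) a => (a : R) + 1) * ∏ j, ((1 - X j) * (1 - X j ^ 2)) =
      ∏ j, (1 + X j) := by
  have h_factor : ∏ j, ((1 - X j) * (1 - X j ^ 2) : MvPowerSeries σ R) =
      (∏ j, (1 - X j ^ 1)) * (∏ j, (1 - X j ^ 1)) * ∏ j, (1 + X j) := by
    simp only [← prod_mul_distrib]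
    exact prod_congr rfl fun j _ => by ring
  rw [h_factor, ← mul_assoc, ← mul_assoc, ofProdCoeff_mul_prod_univ_one_sub_X_pow,
    diffSeq_one_cast_add_one, ofProdCoeff_mul_prod_univ_one_sub_X_pow, diffSeq_one_one,
    ofProdCoeff_ite_eq_zero, one_mul]

theorem ofProdCoeff_even_mul_prod :
    ofProdCoeff (fun (_ : σ) a => if Even a then (1 : R) else 0) *
        ∏ j, ((1 - X j) * (1 - X j ^ 2)) = ∏ j, (1 - X j) := by
  rw [prod_mul_distrib, mul_left_comm, ofProdCoeff_mul_prod_univ_one_sub_X_pow, diffSeq_two_even,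
    ofProdCoeff_ite_eq_zero, mul_one]

end MvPowerSeries

/-- `R ⊆ M` contains exactly one point of each orbit `{d, τ d}` of `M`. -/
structure IsOrbitTransversal {β : Type*} (τ : β → β) (M R : Finset β) : Prop where
  subset : R ⊆ M
  mem_or_apply_mem : ∀ d ∈ M, d ∈ R ∨ τ d ∈ R
  apply_eq_self : ∀ d ∈ R, τ d ∈ R → τ d = d

namespace IsOrbitTransversal

variable {β : Type*} {τ : β → β} {M R : Finset β}

theorem exists_of_involutive (hτ : Function.Involutive τ) (hM : ∀ d ∈ M, τ d ∈ M) :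
    ∃ R, IsOrbitTransversal τ M R := by
  -- any linear order works: keep the smaller point of each orbit
  let _ : LinearOrder β := IsWellOrder.linearOrder WellOrderingRel
  refine ⟨M.filter fun d => d ≤ τ d, filter_subset _ _, fun d hd => ?_, fun d hd hτd => ?_⟩
  · rcases le_total d (τ d) with h | h
    · exact Or.inl (mem_filter.2 ⟨hd, h⟩)
    · exact Or.inr (mem_filter.2 ⟨hM d hd, by rwa [hτ d]⟩)
  · have h₁ := (mem_filter.1 hd).2
    have h₂ := (mem_filter.1 hτd).2
    rw [hτ d] at h₂
    exact le_antisymm h₂ h₁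

theorem eq_of_eq_apply (hR : IsOrbitTransversal τ M R) {d d' : β} (hd : d ∈ R) (hd' : d' ∈ R)
    (h : d' = τ d) : d' = d :=
  h.trans (hR.apply_eq_self d hd (h ▸ hd'))

theorem eq_of_mem_orbit_of_mem_orbit (hR : IsOrbitTransversal τ M R)
    (hτ : Function.Injective τ) {d d' e : β} (hd : d ∈ R) (hd' : d' ∈ R)
    (h : e = d ∨ e = τ d) (h' : e = d' ∨ e = τ d') : d = d' := by
  rcases h with rfl | rfl <;> rcases h' with h' | h'
  exacts [h', hR.eq_of_eq_apply hd' hd h', (hR.eq_of_eq_apply hd hd' h'.symm).symm, hτ h']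

theorem two_mul_card [DecidableEq β] (hτ : Function.Involutive τ) (hM : ∀ d ∈ M, τ d ∈ M)
    (hR : IsOrbitTransversal τ M R) :
    2 * #R = #M + #(M.filter fun d => τ d = d) := by
  have h_union : R ∪ R.image τ = M := by
    refine Subset.antisymm (union_subset hR.subset ?_) fun d hd => ?_
    · rintro _ h
      obtain ⟨e, he, rfl⟩ := mem_image.1 h
      exact hM e (hR.subset he)
    · rcases hR.mem_or_apply_mem d hd with h | h
      · exact mem_union_left _ h
      · exact mem_union_right _ (mem_image.2 ⟨τ d, h, hτ d⟩)
  have h_inter : R ∩ R.image τ = M.filter fun d => τ d = d := by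
    ext d
    simp only [mem_inter, mem_image, mem_filter]
    constructor
    · rintro ⟨hd, e, he, rfl⟩
      exact ⟨hR.subset hd, by rw [hτ e, hR.eq_of_eq_apply he hd rfl]⟩
    · rintro ⟨hd, hfix⟩
      have hdR : d ∈ R := by simpa [hfix] using hR.mem_or_apply_mem d hd
      exact ⟨hdR, d, hdR, hfix⟩
  rw [two_mul]
  nth_rw 2 [← card_image_of_injective R hτ.injective]
  rw [← card_union_add_card_inter, h_union, h_inter]

end IsOrbitTransversal

theorem Finsupp.involutive_mapDomain {α M : Type*} [AddCommMonoid M] {f : α → α}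
    (hf : Function.Involutive f) :
    Function.Involutive (Finsupp.mapDomain f : (α →₀ M) → α →₀ M) :=
  fun d => by rw [← Finsupp.mapDomain_comp, hf.comp_self, Finsupp.mapDomain_id]

namespace MvPolynomial

section Rename

variable {σ R : Type*} [CommSemiring R] (π : Equiv.Perm σ)

theorem rename_eq_self_iff {f : MvPolynomial σ R} :
    rename π f = f ↔ ∀ d, coeff (d.mapDomain π) f = coeff d f := by
  constructor
  · intro h d
    conv_lhs => rw [← h]
    exact coeff_rename_mapDomain π π.injective f d
  · intro h
    ext d
    obtain ⟨e, rfl⟩ := Finsupp.mapDomain_surjective π.surjective d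
    rw [coeff_rename_mapDomain π π.injective, h]

variable (R) [DecidableEq σ]

noncomputable def orbitSum (d : σ →₀ ℕ) : MvPolynomial σ R :=
  ∑ e ∈ {d, d.mapDomain π}, monomial e 1

theorem coeff_orbitSum (d e : σ →₀ ℕ) :
    coeff e (orbitSum R π d) = if e = d ∨ e = d.mapDomain π then 1 else 0 := by
  simp [orbitSum, coeff_sum, coeff_monomial, eq_comm]

variable {π}

theorem rename_orbitSum (hπ : Function.Involutive π) (d : σ →₀ ℕ) :
    rename π (orbitSum R π d) = orbitSum R π d := by
  rw [rename_eq_self_iff]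
  intro e
  have hτ := Finsupp.involutive_mapDomain (M := ℕ) hπ
  simp only [coeff_orbitSum, hτ.eq_iff, hτ d, or_comm]

end Rename

section Transversal

variable {σ K : Type*} [Field K] [DecidableEq σ] {π : Equiv.Perm σ} {M R : Finset (σ →₀ ℕ)}

theorem coeff_orbitSum_of_mem (hR : IsOrbitTransversal (Finsupp.mapDomain π) M R)
    {d d' : σ →₀ ℕ} (hd : d ∈ R) (hd' : d' ∈ R) :
    coeff d (orbitSum K π d') = if d = d' then 1 else 0 := by
  rw [coeff_orbitSum]
  refine if_congr ⟨?_, Or.inl⟩ rfl rfl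
  rintro (h | h)
  exacts [h, hR.eq_of_eq_apply hd' hd h]

theorem linearIndependent_orbitSum (hR : IsOrbitTransversal (Finsupp.mapDomain π) M R) :
    LinearIndependent K fun d : R => orbitSum K π (d : σ →₀ ℕ) := by
  refine LinearIndependent.of_comp (LinearMap.pi fun d : R => lcoeff K (d : σ →₀ ℕ)) ?_
  convert Pi.linearIndependent_single_one R K with d'
  · funext d
    simp only [Function.comp_apply, LinearMap.pi_apply, lcoeff_apply,
      coeff_orbitSum_of_mem hR d.2 d'.2, Pi.single_apply, Subtype.ext_iff]
  · rfl

theorem eq_sum_coeff_smul_orbitSum (hπ : Function.Involutive π)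
    (hR : IsOrbitTransversal (Finsupp.mapDomain π) M R) {f : MvPolynomial σ K}
    (hf : rename π f = f) (hfM : ∀ d ∈ f.support, d ∈ M) :
    f = ∑ d ∈ R, coeff d f • orbitSum K π d := by
  have hτ := Finsupp.involutive_mapDomain (M := ℕ) hπ
  rw [rename_eq_self_iff] at hf
  have h_orbit : ∀ d e : σ →₀ ℕ, e = d ∨ e = d.mapDomain π → coeff d f = coeff e f := by
    rintro d e (rfl | rfl)
    exacts [rfl, (hf d).symm]
  ext e
  simp only [coeff_sum, coeff_smul, coeff_orbitSum, smul_eq_mul, mul_ite, mul_one, mul_zero]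
  by_cases he : e ∈ M
  · obtain ⟨d₀, hd₀, he₀⟩ : ∃ d₀ ∈ R, e = d₀ ∨ e = d₀.mapDomain π := by
      rcases hR.mem_or_apply_mem e he with h | h
      exacts [⟨e, h, Or.inl rfl⟩, ⟨_, h, Or.inr (hτ e).symm⟩]
    rw [sum_eq_single_of_mem d₀ hd₀, if_pos he₀, h_orbit d₀ e he₀]
    exact fun d hd hne => if_neg fun he' =>
      hne (hR.eq_of_mem_orbit_of_mem_orbit hτ.injective hd hd₀ he' he₀)
  · have hfe : coeff e f = 0 := notMem_support_iff.1 fun h => he (hfM e h)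
    refine hfe.trans (sum_eq_zero fun d _ => ?_).symm
    split_ifs with h
    exacts [(h_orbit d e h).trans hfe, rfl]

theorem orbitSum_mem_invariants (hπ : Function.Involutive π) (hM : ∀ d ∈ M, d.mapDomain π ∈ M)
    {d : σ →₀ ℕ} (hd : d ∈ M) :
    orbitSum K π d ∈ {f : MvPolynomial σ K | rename π f = f ∧ ∀ e ∈ f.support, e ∈ M} := by
  refine ⟨rename_orbitSum K hπ d, fun e he => ?_⟩
  rw [mem_support_iff, coeff_orbitSum, ne_eq, ite_eq_right_iff, not_forall] at he
  obtain ⟨rfl | rfl, -⟩ := he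
  exacts [hd, hM d hd]

theorem span_invariants_eq (hπ : Function.Involutive π) (hM : ∀ d ∈ M, d.mapDomain π ∈ M)
    (hR : IsOrbitTransversal (Finsupp.mapDomain π) M R) :
    Submodule.span K {f : MvPolynomial σ K | rename π f = f ∧ ∀ d ∈ f.support, d ∈ M} =
      Submodule.span K (Set.range fun d : R => orbitSum K π (d : σ →₀ ℕ)) := by
  refine le_antisymm (Submodule.span_le.2 fun f ⟨hf, hfM⟩ => ?_)
    (Submodule.span_mono ?_)
  · rw [SetLike.mem_coe, eq_sum_coeff_smul_orbitSum hπ hR hf hfM]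
    exact Submodule.sum_mem _ fun d hd =>
      Submodule.smul_mem _ _ (Submodule.subset_span ⟨⟨d, hd⟩, rfl⟩)
  · rintro _ ⟨d, rfl⟩
    exact orbitSum_mem_invariants hπ hM (hR.subset d.2)

theorem finrank_span_invariants (hπ : Function.Involutive π) (hM : ∀ d ∈ M, d.mapDomain π ∈ M)
    (hR : IsOrbitTransversal (Finsupp.mapDomain π) M R) :
    Module.finrank K (Submodule.span K
      {f : MvPolynomial σ K | rename π f = f ∧ ∀ d ∈ f.support, d ∈ M}) = #R := by
  rw [span_invariants_eq hπ hM hR, finrank_span_eq_card (linearIndependent_orbitSum hR),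
    Fintype.card_coe]

end Transversal

end MvPolynomial

def swapSlots (m : ℕ) : Equiv.Perm (Fin m × Fin 2) :=
  (Equiv.refl (Fin m)).prodCongr (Equiv.swap 0 1)

theorem involutive_swapSlots (m : ℕ) : Function.Involutive (swapSlots m) := fun _ =>
  Prod.ext rfl (Equiv.swap_apply_self _ _ _)

theorem isMultiSymm2_iff {K : Type*} [Field K] {m : ℕ} {f : MvPolynomial (Fin m × Fin 2) K} :
    IsMultiSymm2 f ↔ rename (swapSlots m) f = f := by
  refine ⟨fun h => h (Equiv.swap 0 1), fun h σ => ?_⟩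
  obtain rfl | rfl : σ = 1 ∨ σ = Equiv.swap 0 1 := by revert σ; decide
  exacts [rename_id_apply f, h]

noncomputable def exponentPairs (m : ℕ) : (Fin m × Fin 2 →₀ ℕ) ≃ (Fin m → ℕ × ℕ) :=
  Finsupp.equivFunOnFinite.trans
    ((Equiv.curry _ _ _).trans (Equiv.piCongrRight fun _ => finTwoArrowEquiv ℕ))

theorem exponentPairs_apply {m : ℕ} (d : Fin m × Fin 2 →₀ ℕ) (i : Fin m) :
    exponentPairs m d i = (d (i, 0), d (i, 1)) := rfl

theorem exponentPairs_mapDomain_swapSlots {m : ℕ} (d : Fin m × Fin 2 →₀ ℕ) (i : Fin m) :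
    exponentPairs m (d.mapDomain (swapSlots m)) i = (exponentPairs m d i).swap := by
  rw [exponentPairs_apply, exponentPairs_apply, Finsupp.mapDomain_equiv_apply,
    Finsupp.mapDomain_equiv_apply]
  rfl

theorem mapDomain_swapSlots_eq_self_iff {m : ℕ} {d : Fin m × Fin 2 →₀ ℕ} :
    d.mapDomain (swapSlots m) = d ↔ ∀ i, (exponentPairs m d i).swap = exponentPairs m d i := by
  rw [← (exponentPairs m).injective.eq_iff, funext_iff]
  simp only [exponentPairs_mapDomain_swapSlots]

noncomputable def monomialsOfDegree {m : ℕ} (α : Fin m →₀ ℕ) : Finset (Fin m × Fin 2 →₀ ℕ) :=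
  (Fintype.piFinset fun i => antidiagonal (α i)).map (exponentPairs m).symm.toEmbedding

theorem mem_monomialsOfDegree {m : ℕ} {α : Fin m →₀ ℕ} {d : Fin m × Fin 2 →₀ ℕ} :
    d ∈ monomialsOfDegree α ↔ ∀ i, ∑ j : Fin 2, d (i, j) = α i := by
  simp [monomialsOfDegree, Finset.mem_map_equiv, exponentPairs_apply, Fin.sum_univ_two]

theorem card_monomialsOfDegree {m : ℕ} (α : Fin m →₀ ℕ) :
    #(monomialsOfDegree α) = ∏ i, (α i + 1) := by
  simp [monomialsOfDegree]

theorem card_antidiagonal_filter_swap_eq_self (n : ℕ) :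
    #((antidiagonal n).filter fun p => p.swap = p) = if Even n then 1 else 0 := by
  split_ifs with hn
  · obtain ⟨k, rfl⟩ := hn
    rw [card_eq_one]
    refine ⟨(k, k), ext fun ⟨a, b⟩ => ?_⟩
    simp only [mem_filter, HasAntidiagonal.mem_antidiagonal, Prod.swap_prod_mk, Prod.mk.injEq,
      mem_singleton]
    omega
  · rw [card_eq_zero, filter_eq_empty_iff]
    rintro ⟨a, b⟩ hab h
    simp only [HasAntidiagonal.mem_antidiagonal, Prod.swap_prod_mk, Prod.mk.injEq] at hab h
    exact hn ⟨a, by omega⟩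

theorem card_monomialsOfDegree_filter_fixed {m : ℕ} (α : Fin m →₀ ℕ) :
    #((monomialsOfDegree α).filter fun d => d.mapDomain (swapSlots m) = d) =
      ∏ i, if Even (α i) then 1 else 0 := by
  have h_fixed : (monomialsOfDegree α).filter (fun d => d.mapDomain (swapSlots m) = d) =
      (Fintype.piFinset fun i => (antidiagonal (α i)).filter fun p => p.swap = p).map
        (exponentPairs m).symm.toEmbedding := by
    ext d
    simp only [monomialsOfDegree, mem_filter, mem_map_equiv, Equiv.symm_symm,
      Fintype.mem_piFinset, mapDomain_swapSlots_eq_self_iff, forall_and]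
  simp only [h_fixed, card_map, Fintype.card_piFinset, card_antidiagonal_filter_swap_eq_self]

theorem mapDomain_swapSlots_mem_monomialsOfDegree {m : ℕ} {α : Fin m →₀ ℕ}
    {d : Fin m × Fin 2 →₀ ℕ} (hd : d ∈ monomialsOfDegree α) :
    d.mapDomain (swapSlots m) ∈ monomialsOfDegree α := by
  simpa only [monomialsOfDegree, mem_map_equiv, Equiv.symm_symm, Fintype.mem_piFinset,
    exponentPairs_mapDomain_swapSlots, HasAntidiagonal.swap_mem_antidiagonal] using hd

theorem two_mul_finrank_invariants (K : Type*) [Field K] {m : ℕ} (α : Fin m →₀ ℕ) :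
    2 * Module.finrank K (Submodule.span K {f : MvPolynomial (Fin m × Fin 2) K |
      IsMultiSymm2 f ∧ ∀ d ∈ f.support, ∀ i : Fin m, (∑ j : Fin 2, d (i, j)) = α i}) =
      ∏ i, (α i + 1) + ∏ i, if Even (α i) then 1 else 0 := by
  have hτ := Finsupp.involutive_mapDomain (M := ℕ) (involutive_swapSlots m)
  have hM : ∀ d ∈ monomialsOfDegree α, d.mapDomain (swapSlots m) ∈ monomialsOfDegree α :=
    fun _ => mapDomain_swapSlots_mem_monomialsOfDegree
  obtain ⟨R, hR⟩ := IsOrbitTransversal.exists_of_involutive hτ hM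
  have h_set : {f : MvPolynomial (Fin m × Fin 2) K |
      IsMultiSymm2 f ∧ ∀ d ∈ f.support, ∀ i : Fin m, (∑ j : Fin 2, d (i, j)) = α i} =
      {f | rename (swapSlots m) f = f ∧ ∀ d ∈ f.support, d ∈ monomialsOfDegree α} :=
    Set.ext fun _ =>
      and_congr isMultiSymm2_iff (forall₂_congr fun _ _ => mem_monomialsOfDegree.symm)
  rw [h_set, MvPolynomial.finrank_span_invariants (involutive_swapSlots m) hM hR,
    hR.two_mul_card hτ hM, card_monomialsOfDegree, card_monomialsOfDegree_filter_fixed]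

theorem hilbertSeriesS2_add_self (K : Type*) [Field K] (m : ℕ) :
    hilbertSeriesS2 K m + hilbertSeriesS2 K m =
      MvPowerSeries.ofProdCoeff (fun _ a => (a : ℤ) + 1) +
        MvPowerSeries.ofProdCoeff fun _ a => if Even a then 1 else 0 := by
  ext α
  have h := two_mul_finrank_invariants K α
  rw [map_add, map_add, MvPowerSeries.coeff_ofProdCoeff, MvPowerSeries.coeff_ofProdCoeff]
  rw [← two_mul]
  change 2 * ((Module.finrank K _ : ℕ) : ℤ) = _
  exact_mod_cast h

theorem hilbert_series_S2_general
    (K : Type*) [Field K] (m : ℕ) :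
    hilbertSeriesS2 K m *
        ∏ j : Fin m, ((1 - MvPowerSeries.X j) * (1 - MvPowerSeries.X j ^ 2)) =
      ∑ i ∈ Finset.range (m / 2 + 1),
        ∑ S ∈ Finset.univ.powersetCard (2 * i), ∏ j ∈ S, MvPowerSeries.X j := by
  have h_double : (hilbertSeriesS2 K m + hilbertSeriesS2 K m) *
      ∏ j : Fin m, ((1 - MvPowerSeries.X j) * (1 - MvPowerSeries.X j ^ 2)) =
      2 * ∑ i ∈ Finset.range (m / 2 + 1),
        ∑ S ∈ Finset.univ.powersetCard (2 * i), ∏ j ∈ S, MvPowerSeries.X j := by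
    rw [hilbertSeriesS2_add_self, add_mul, MvPowerSeries.ofProdCoeff_cast_add_one_mul_prod,
      MvPowerSeries.ofProdCoeff_even_mul_prod, prod_one_add_add_prod_one_sub, card_univ,
      Fintype.card_fin]
  ext γ
  have h_coeff := congrArg (MvPowerSeries.coeff γ) h_double
  rw [add_mul, two_mul, map_add, map_add] at h_coeff
  omega

/-- For `char K ≠ 2`, the multigraded Hilbert series of `K[V^m]^{S_2}` equals
`(∑_{i=0}^{⌊m/2⌋} e_{2i}(t₁, …, t_m)) / ∏_{j=1}^m (1 − t_j)(1 − t_j²)`. -/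
theorem hilbert_series_S2
    (K : Type*) [Field K] (h2 : (2 : K) ≠ 0) (m : ℕ) :
    hilbertSeriesS2 K m *
        ∏ j : Fin m, ((1 - MvPowerSeries.X j) * (1 - MvPowerSeries.X j ^ 2)) =
      ∑ i ∈ Finset.range (m / 2 + 1),
        ∑ S ∈ Finset.univ.powersetCard (2 * i), ∏ j ∈ S, MvPowerSeries.X j :=
  hilbert_series_S2_general K m
end

section
/- Let K be a field with n! invertible, and let w be a monomial in x(1),...,x(m) having degree ≥ n in one of the variables and total degree ≥ n+1. Then [w] = Σ_{j=1}^n w_{⟨j⟩} belongs to the ideal of K[V^m]^{S_n} generated by the power sums [x(i)^k], i = 1,...,m, k = 1,...,n. -/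
open MvPolynomial

/-!
Let `x(i)` have degree `≥ n` in `w` and write `w = w' · x(i)^n`. Each copy `x(i)_j` is a root
of `∏_{j'} (T - x(i)_{j'})`, so `x(i)_j^n = ∑_{k<n} (-1)^k e_{k+1} x(i)_j^{n-k-1}`, where the
`e_k` are the elementary symmetric polynomials in `x(i)_1, …, x(i)_n`. Summing over `j` gives
`[w] = ∑_k (-1)^k [w' x(i)^{n-k-1}] e_{k+1}` with invariant coefficients. Since `k ∣ n!` is
invertible for `1 ≤ k ≤ n`, Newton's identities write each `e_k` as a combination of the power
sums `[x(i)^l]`, `l ≤ k`, with invariant coefficients.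
-/

open Finset

namespace MvPolynomial

variable {R σ : Type*} [CommRing R] [Fintype σ]

theorem sum_neg_one_pow_mul_esymm_mul_X_pow_eq_zero (j : σ) :
    ∑ k ∈ range (Fintype.card σ + 1),
      (-1) ^ k * esymm σ R k * X j ^ (Fintype.card σ - k) = 0 := by
  have h := congrArg (Polynomial.eval (X j : MvPolynomial σ R))
    (Multiset.prod_X_sub_X_eq_sum_esymm (univ.val.map fun i : σ => (X i : MvPolynomial σ R)))
  rw [Polynomial.eval_multiset_prod, Multiset.map_map, Multiset.map_map,
    Multiset.prod_eq_zero (Multiset.mem_map.2 ⟨j, mem_univ j, by simp⟩)] at h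
  simpa [Polynomial.eval_finsetSum, ← esymm_eq_multiset_esymm, mul_assoc] using h.symm

theorem X_pow_card_eq (j : σ) :
    X j ^ Fintype.card σ = ∑ k ∈ range (Fintype.card σ),
      (-1) ^ k * esymm σ R (k + 1) * X j ^ (Fintype.card σ - (k + 1)) := by
  have h := sum_neg_one_pow_mul_esymm_mul_X_pow_eq_zero (R := R) j
  simp only [sum_range_succ', esymm_zero, pow_zero, one_mul, Nat.sub_zero, pow_succ,
    mul_neg_one, neg_mul, sum_neg_distrib] at h
  linear_combination h

theorem exists_esymm_eq_sum_mul_psum {k : ℕ} (hk : IsUnit (k : R)) :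
    ∃ c : ℕ → MvPolynomial σ R, (∀ i, (c i).IsSymmetric) ∧
      esymm σ R k = ∑ a ∈ antidiagonal k with a.1 < k, c a.1 * psum σ R a.2 := by
  refine ⟨fun i => C (((hk.unit⁻¹ : Rˣ) : R) * (-1) ^ (k + 1 + i)) * esymm σ R i,
    fun i => (IsSymmetric.C _).mul (esymm_isSymmetric _ _ _), ?_⟩
  calc esymm σ R k = C ((hk.unit⁻¹ : Rˣ) : R) * ((k : MvPolynomial σ R) * esymm σ R k) := by
        rw [← mul_assoc, ← map_natCast C, ← C_mul, IsUnit.val_inv_mul, C_1, one_mul]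
    _ = _ := by
      simp only [mul_esymm_eq_sum, mul_sum, map_mul, map_pow, map_neg, map_one, pow_add]
      exact sum_congr rfl fun a _ => by ring

end MvPolynomial

section PolarizedPowerSums

variable {K : Type*} [CommRing K] {m n : ℕ}

theorem isMultiSymm_mul {f g : MvPolynomial (Fin m × Fin n) K}
    (hf : IsMultiSymm f) (hg : IsMultiSymm g) : IsMultiSymm (f * g) := fun σ => by
  rw [map_mul, hf σ, hg σ]

theorem isMultiSymm_neg_one_pow (s : ℕ) :
    IsMultiSymm ((-1) ^ s : MvPolynomial (Fin m × Fin n) K) := fun σ => by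
  rw [map_pow, map_neg, map_one]

theorem isMultiSymm_rename_of_isSymmetric {q : MvPolynomial (Fin n) K}
    (hq : q.IsSymmetric) (i : Fin m) : IsMultiSymm (rename (fun j => (i, j)) q) := fun σ => by
  rw [rename_rename, show (fun p : Fin m × Fin n => (p.1, σ p.2)) ∘ (fun j => (i, j)) =
    (fun j => (i, j)) ∘ σ from rfl, ← rename_rename, hq σ]

theorem isMultiSymm_polPowerSum (a : Fin m → ℕ) : IsMultiSymm (polPowerSum K m n a) :=
  fun σ => by
    simp only [polPowerSum, map_sum, map_prod, map_pow, rename_X]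
    exact Fintype.sum_equiv σ _ _ fun _ => rfl

theorem prod_X_pow_single (i : Fin m) (c : ℕ) (j : Fin n) :
    ∏ i', (X (i', j) : MvPolynomial (Fin m × Fin n) K) ^ Pi.single i c i' = X (i, j) ^ c := by
  simp [Pi.single_apply, pow_ite]

theorem polPowerSum_single (i : Fin m) (c : ℕ) :
    polPowerSum K m n (Pi.single i c) = rename (fun j => (i, j)) (psum (Fin n) K c) := by
  simp only [polPowerSum, psum, map_sum, map_pow, rename_X, prod_X_pow_single]

theorem polPowerSum_add_single (b : Fin m → ℕ) (i : Fin m) (c : ℕ) :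
    polPowerSum K m n (b + Pi.single i c) = ∑ j, (∏ i', X (i', j) ^ b i') * X (i, j) ^ c := by
  simp only [polPowerSum, Pi.add_apply, pow_add, prod_mul_distrib, prod_X_pow_single]

theorem polPowerSum_add_single_card (b : Fin m → ℕ) (i : Fin m) :
    polPowerSum K m n (b + Pi.single i n) = ∑ k ∈ range n,
      (-1) ^ k * polPowerSum K m n (b + Pi.single i (n - (k + 1))) *
        rename (fun j => (i, j)) (esymm (Fin n) K (k + 1)) := by
  have hX : ∀ j : Fin n, (X (i, j) : MvPolynomial (Fin m × Fin n) K) ^ n = ∑ k ∈ range n,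
      (-1) ^ k * rename (fun j => (i, j)) (esymm (Fin n) K (k + 1)) * X (i, j) ^ (n - (k + 1)) := by
    intro j
    simpa using congrArg (rename fun j => (i, j)) (X_pow_card_eq (R := K) j)
  simp only [polPowerSum_add_single, hX, mul_sum, sum_mul]
  rw [sum_comm]
  exact sum_congr rfl fun k _ => sum_congr rfl fun j _ => by ring

variable (K m n) in
/-- The ideal `⟨P⟩` of the invariant ring, as a subset of `K[V^m]`. -/
noncomputable def powerSumIdeal : Submodule K (MvPolynomial (Fin m × Fin n) K) :=
  Submodule.span K {h | ∃ (g : MvPolynomial (Fin m × Fin n) K) (i : Fin m) (k : ℕ),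
    IsMultiSymm g ∧ 1 ≤ k ∧ k ≤ n ∧ h = g * polPowerSum K m n (Pi.single i k)}

theorem mul_mem_powerSumIdeal {f g : MvPolynomial (Fin m × Fin n) K}
    (hg : IsMultiSymm g) (hf : f ∈ powerSumIdeal K m n) : g * f ∈ powerSumIdeal K m n := by
  induction hf using Submodule.span_induction with
  | mem x hx =>
    obtain ⟨g', i, k, hg', hk1, hkn, rfl⟩ := hx
    exact Submodule.subset_span
      ⟨g * g', i, k, isMultiSymm_mul hg hg', hk1, hkn, (mul_assoc _ _ _).symm⟩
  | zero => simp
  | add x y _ _ hx hy => simpa [mul_add] using add_mem hx hy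
  | smul c x _ hx => simpa [mul_smul_comm] using Submodule.smul_mem _ c hx

theorem rename_esymm_mem_powerSumIdeal (i : Fin m) {k : ℕ} (hk : IsUnit (k : K)) (hkn : k ≤ n) :
    rename (fun j => (i, j)) (esymm (Fin n) K k) ∈ powerSumIdeal K m n := by
  obtain ⟨c, hc, he⟩ := exists_esymm_eq_sum_mul_psum (σ := Fin n) hk
  rw [he, map_sum]
  refine Submodule.sum_mem _ fun a ha => Submodule.subset_span ?_
  rw [mem_filter, HasAntidiagonal.mem_antidiagonal] at ha
  exact ⟨_, i, a.2, isMultiSymm_rename_of_isSymmetric (hc a.1) i, by omega, by omega,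
    by rw [map_mul, polPowerSum_single]⟩

end PolarizedPowerSums

theorem long_trace_mem_parameter_ideal_general
    (K : Type*) [Field K] (m n : ℕ) (hn : IsUnit (n.factorial : K))
    (a : Fin m → ℕ) (ha : ∃ i, n ≤ a i) :
    polPowerSum K m n a ∈
      Submodule.span K {h : MvPolynomial (Fin m × Fin n) K |
        ∃ (g : MvPolynomial (Fin m × Fin n) K) (i : Fin m) (k : ℕ),
          IsMultiSymm g ∧ 1 ≤ k ∧ k ≤ n ∧
          h = g * polPowerSum K m n (Pi.single i k)} := by
  obtain ⟨i, hi⟩ := ha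
  have hsplit : a = (a - Pi.single i n) + Pi.single i n :=
    (tsub_add_cancel_of_le fun i' => by rcases eq_or_ne i' i with rfl | h <;> simp [*]).symm
  change _ ∈ powerSumIdeal K m n
  rw [hsplit, polPowerSum_add_single_card]
  refine Submodule.sum_mem _ fun k hk => ?_
  have hk : k + 1 ≤ n := mem_range.1 hk
  have hunit : IsUnit ((k + 1 : ℕ) : K) :=
    isUnit_of_dvd_unit (Nat.cast_dvd_cast (Nat.dvd_factorial k.succ_pos hk)) hn
  exact mul_mem_powerSumIdeal
    (isMultiSymm_mul (isMultiSymm_neg_one_pow k) (isMultiSymm_polPowerSum _))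
    (rename_esymm_mem_powerSumIdeal i hunit hk)

/-- Let `K` be a field with `n!` invertible, and let `w = x(1)^{a 1} ⋯ x(m)^{a m}` be a
monomial of degree `≥ n` in one of the variables and of total degree `≥ n + 1`. Then
`[w]` belongs to the ideal `⟨P⟩` of the invariant ring `K[V^m]^{S_n}` generated by the
power sums `P = {[x(i)^k] : 1 ≤ i ≤ m, 1 ≤ k ≤ n}` (as a subset of `K[V^m]`, this ideal
is the `K`-span of the products `g · [x(i)^k]` with `g` invariant). -/
theorem long_trace_mem_parameter_ideal
    (K : Type*) [Field K] (m n : ℕ) (hn : IsUnit (n.factorial : K))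
    (a : Fin m → ℕ) (ha : ∃ i, n ≤ a i) (hdeg : n + 1 ≤ ∑ i, a i) :
    polPowerSum K m n a ∈
      Submodule.span K {h : MvPolynomial (Fin m × Fin n) K |
        ∃ (g : MvPolynomial (Fin m × Fin n) K) (i : Fin m) (k : ℕ),
          IsMultiSymm g ∧ 1 ≤ k ∧ k ≤ n ∧
          h = g * polPowerSum K m n (Pi.single i k)} :=
  long_trace_mem_parameter_ideal_general K m n hn a ha
end
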